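/- arXiv:math/9809202 — 4 statements merged into one kernel-verified Lean document; each statement's English description precedes it below -/
import Mathlib

section
/- Fix k ≥ 1 and let 𝒞 = {C₃, C₅, …, C_{2k+1}} be the set of all odd cycles of length at most 2k+1. Then there is a universal countable 𝒞-free graph; that is, there is a countable graph U containing no odd cycle of length at most 2k+1 as a subgraph, such that every countable graph containing no odd cycle of length at most 2k+1 as a subgraph is isomorphic to an induced subgraph of U. -/
open FirstOrder SimpleGraph

/-- `C` is isomorphic to a (not necessarily induced) subgraph of `G`. -/
def SubIso {α β : Type*} (C : SimpleGraph α) (G : SimpleGraph β) : Prop :=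
  ∃ f : α ↪ β, ∀ u v, C.Adj u v → G.Adj (f u) (f v)

/-- `G` omits the family `𝒞`: no member of `𝒞` is isomorphic to a subgraph of `G`. -/
def CFree {ι : Type} {nn : ι → ℕ} (𝒞 : ∀ i, SimpleGraph (Fin (nn i)))
    {V : Type} (G : SimpleGraph V) : Prop :=
  ∀ i, ¬ SubIso (𝒞 i) G

/-- `G` is existentially complete in `H`, where `e` realizes `G` as an induced subgraph of
`H`: for all finite `A ⊆ V(G)` and finite `B ⊆ V(H)` containing (the image of) `A`, there is
an injection `f : B → V(G)` which is the identity on `A` and is an isomorphism of the graph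
induced by `H` on `B` onto the graph induced by `G` on `f(B)`. -/
def ExtComplete {V W : Type} (G : SimpleGraph V) (H : SimpleGraph W) (e : G ↪g H) : Prop :=
  ∀ (A : Finset V) (B : Finset W), (∀ a ∈ A, e a ∈ B) →
    ∃ f : W → V, Set.InjOn f ↑B ∧ (∀ a ∈ A, f (e a) = a) ∧
      ∀ u ∈ B, ∀ v ∈ B, (H.Adj u v ↔ G.Adj (f u) (f v))

/-- Membership in `E_𝒞`: countable, `𝒞`-free, and existentially complete in every countable
`𝒞`-free graph containing it as an induced subgraph. -/
def InEC {ι : Type} {nn : ι → ℕ} (𝒞 : ∀ i, SimpleGraph (Fin (nn i)))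
    {V : Type} (G : SimpleGraph V) : Prop :=
  Countable V ∧ CFree 𝒞 G ∧
    ∀ (W : Type) (H : SimpleGraph W), Countable W → CFree 𝒞 H →
      ∀ e : G ↪g H, ExtComplete G H e

/-- Satisfaction of a sentence of the first-order language of graphs in a simple graph. -/
def GSat {V : Type} (G : SimpleGraph V) (φ : Language.graph.Sentence) : Prop :=
  letI := G.structure
  V ⊨ φ

/-- Realization of a formula of the first-order language of graphs in a simple graph. -/
def GRealize {V : Type} (G : SimpleGraph V) {α : Type} (φ : Language.graph.Formula α)
    (v : α → V) : Prop :=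
  letI := G.structure
  φ.Realize v

/-- The theory `T*_𝒞`: all graph-language sentences true in every member of `E_𝒞`. -/
def TheoryEC {ι : Type} {nn : ι → ℕ} (𝒞 : ∀ i, SimpleGraph (Fin (nn i))) :
    Set Language.graph.Sentence :=
  {φ | ∀ (V : Type) (G : SimpleGraph V), InEC 𝒞 G → GSat G φ}

/-- An existential formula: an existential closure of a quantifier-free formula. -/
def IsExistentialFormula {α : Type} (φ : Language.graph.Formula α) : Prop :=
  ∃ (k : ℕ) (ψ : Language.graph.BoundedFormula α k), ψ.IsQF ∧ φ = ψ.exs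

/-- The algebraic closure of `A` in `G`: the set of vertices `a` such that some existential
formula with parameters from `A` has finitely many realizations in `G`, one of which is `a`. -/
def aclG {V : Type} (G : SimpleGraph V) (A : Set V) : Set V :=
  {a | ∃ (m : ℕ) (φ : Language.graph.Formula (Fin (m + 1))) (p : Fin m → V),
    IsExistentialFormula φ ∧ (∀ i, p i ∈ A) ∧
    {a' : V | GRealize G φ (Fin.cons a' p)}.Finite ∧
    GRealize G φ (Fin.cons a p)}

/-- There is a universal countable `𝒞`-free graph: a countable `𝒞`-free graph into which
every countable `𝒞`-free graph embeds as an induced subgraph. -/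
def ExistsUniversal {ι : Type} {nn : ι → ℕ} (𝒞 : ∀ i, SimpleGraph (Fin (nn i))) : Prop :=
  ∃ (U : Type) (GU : SimpleGraph U), Countable U ∧ CFree 𝒞 GU ∧
    ∀ (W : Type) (H : SimpleGraph W), Countable W → CFree 𝒞 H → Nonempty (H ↪g GU)

namespace Stmt8

/-- From an injective closed walk (as a function) of length `L ≥ 3`, get a cycle subgraph. -/
theorem subIso_of_closed {V : Type} {G : SimpleGraph V} {L : ℕ} (hL : 3 ≤ L) (c : ℕ → V)
    (hcyc : c L = c 0) (hstep : ∀ i, i < L → G.Adj (c i) (c (i + 1)))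
    (hinj : ∀ i j, i < j → j < L → c i ≠ c j) :
    SubIso (SimpleGraph.cycleGraph L) G := by
  have hinj' : Function.Injective (fun a : Fin L => c a.val) := by
    intro a b hab
    rcases lt_trichotomy a.val b.val with h | h | h
    · exact absurd hab (hinj _ _ h b.isLt)
    · exact Fin.ext h
    · exact absurd hab.symm (hinj _ _ h a.isLt)
  have key : ∀ u v : Fin L, (v - u).val = 1 → G.Adj (c u.val) (c v.val) := by
    intro u v hsub
    rw [Fin.sub_def] at hsub
    simp only at hsub
    have hu := u.isLt
    have hv := v.isLt
    by_cases hc : L - u.val + v.val < L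
    · rw [Nat.mod_eq_of_lt hc] at hsub
      have h1 : v.val = 0 ∧ u.val = L - 1 := by omega
      have := hstep (L-1) (by omega)
      rw [show L - 1 + 1 = L by omega, hcyc] at this
      rw [h1.1, h1.2]
      exact this
    · have h2 : L - u.val + v.val - L < L := by omega
      have : (L - u.val + v.val) % L = L - u.val + v.val - L := by
        rw [Nat.mod_eq_sub_mod (by omega), Nat.mod_eq_of_lt h2]
      rw [this] at hsub
      have h3 : v.val = u.val + 1 := by omega
      rw [h3]
      exact hstep u.val (by omega)
  refine ⟨⟨fun a => c a.val, hinj'⟩, ?_⟩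
  intro u v huv
  rw [SimpleGraph.cycleGraph_adj'] at huv
  rcases huv with h | h
  · exact (key v u h).symm
  · exact key u v h

/-- In a graph omitting all odd cycles of length at most `2k+1`, there is no closed walk
(presented as a function) of odd length at most `2k+1`. -/
theorem no_short_odd_closed {k : ℕ} {V : Type} {G : SimpleGraph V}
    (hfree : CFree (fun j : Fin k => SimpleGraph.cycleGraph (2 * (j : ℕ) + 3)) G) :
    ∀ L, L % 2 = 1 → L ≤ 2 * k + 1 → ∀ c : ℕ → V, c L = c 0 →
      (∀ i, i < L → G.Adj (c i) (c (i + 1))) → False := by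
  intro L
  induction L using Nat.strong_induction_on with
  | _ L IH =>
    intro hodd hle c hcyc hstep
    rcases Nat.lt_or_ge L 3 with hL3 | hL3
    · -- L = 1
      have hL1 : L = 1 := by omega
      subst hL1
      have := hstep 0 (by omega)
      rw [show (0:ℕ) + 1 = 1 from rfl, hcyc] at this
      exact G.irrefl this
    · by_cases hrep : ∃ i j, i < j ∧ j < L ∧ c i = c j
      · obtain ⟨i, j, hij, hjL, hcij⟩ := hrep
        set d := j - i with hd
        by_cases hdo : d % 2 = 1
        · -- inner closed walk of odd length d
          refine IH d (by omega) hdo (by omega) (fun t => c (i + t)) ?_ ?_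
          · show c (i + d) = c (i + 0)
            rw [show i + d = j by omega, show i + 0 = i from rfl, ← hcij]
          · intro t ht
            have := hstep (i + t) (by omega)
            rwa [show i + t + 1 = i + (t + 1) by omega] at this
        · -- outer closed walk of odd length L - d
          refine IH (L - d) (by omega) (by omega) (by omega)
            (fun t => if t ≤ i then c t else c (t + d)) ?_ ?_
          · have h1 : ¬ (L - d ≤ i) := by omega
            show (if L - d ≤ i then c (L - d) else c (L - d + d)) =
              (if 0 ≤ i then c 0 else c (0 + d))
            rw [if_neg h1, if_pos (Nat.zero_le i), show L - d + d = L by omega, hcyc]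
          · intro t ht
            show G.Adj (if t ≤ i then c t else c (t + d))
              (if t + 1 ≤ i then c (t + 1) else c (t + 1 + d))
            by_cases h1 : t + 1 ≤ i
            · rw [if_pos h1, if_pos (by omega : t ≤ i)]
              exact hstep t (by omega)
            · by_cases h2 : t ≤ i
              · -- t = i
                have hti : t = i := by omega
                rw [if_pos h2, if_neg h1, hti, hcij, show i + 1 + d = j + 1 by omega]
                exact hstep j (by omega)
              · rw [if_neg h2, if_neg h1, show t + 1 + d = t + d + 1 by omega]
                exact hstep (t + d) (by omega)
      · push_neg at hrep
        have hsub := subIso_of_closed hL3 c hcyc hstep (fun i j h1 h2 => hrep i j h1 h2)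
        have hjk : (L - 3) / 2 < k := by omega
        have hLeq : 2 * ((L - 3) / 2) + 3 = L := by omega
        apply hfree ⟨(L - 3) / 2, hjk⟩
        show SubIso (SimpleGraph.cycleGraph (2 * ((L - 3) / 2) + 3)) G
        rw [hLeq]
        exact hsub

end Stmt8

namespace Stmt8

variable (k : ℕ) {V : Type}

/-- Capped parity distance in a graph: least length of a walk from `u` to `v` of parity `p`,
capped at `2k+3`. -/
noncomputable def dG (G : SimpleGraph V) (u v : V) (p : Bool) : ℕ :=
  sInf {m | m = 2 * k + 3 ∨ ∃ w : G.Walk u v, w.length = m ∧ m % 2 = (if p then 1 else 0)}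

theorem dG_le_cap (G : SimpleGraph V) (u v : V) (p : Bool) : dG k G u v p ≤ 2 * k + 3 :=
  Nat.sInf_le (Or.inl rfl)

theorem dG_le_walk (G : SimpleGraph V) (u v : V) (p : Bool) (w : G.Walk u v)
    (hw : w.length % 2 = (if p then 1 else 0)) : dG k G u v p ≤ w.length :=
  Nat.sInf_le (Or.inr ⟨w, rfl, hw⟩)

theorem dG_cases (G : SimpleGraph V) (u v : V) (p : Bool) : dG k G u v p = 2 * k + 3 ∨
    ∃ w : G.Walk u v, w.length = dG k G u v p ∧ dG k G u v p % 2 = (if p then 1 else 0) := by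
  have h : dG k G u v p ∈ {m | m = 2 * k + 3 ∨
      ∃ w : G.Walk u v, w.length = m ∧ m % 2 = (if p then 1 else 0)} :=
    Nat.sInf_mem ⟨2 * k + 3, Or.inl rfl⟩
  exact h

theorem dG_symm (G : SimpleGraph V) (u v : V) (p : Bool) : dG k G u v p = dG k G v u p := by
  have h : ∀ a b : V, dG k G a b p ≤ dG k G b a p := by
    intro a b
    rcases dG_cases k G b a p with h | ⟨w, hw, hpar⟩
    · exact (dG_le_cap k G a b p).trans h.ge
    · have := dG_le_walk k G a b p w.reverse
        (by rwa [SimpleGraph.Walk.length_reverse, hw])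
      rwa [SimpleGraph.Walk.length_reverse, hw] at this
  exact le_antisymm (h u v) (h v u)

theorem dG_tri (G : SimpleGraph V) (u v w : V) (p q : Bool) :
    dG k G u v (xor p q) ≤ dG k G u w p + dG k G w v q := by
  rcases dG_cases k G u w p with h1 | ⟨w1, hw1, hp1⟩
  · have := dG_le_cap k G u v (xor p q)
    omega
  · rcases dG_cases k G w v q with h2 | ⟨w2, hw2, hp2⟩
    · have := dG_le_cap k G u v (xor p q)
      omega
    · rw [← hw1, ← hw2]
      have := dG_le_walk k G u v (xor p q) (w1.append w2) ?_
      · rwa [SimpleGraph.Walk.length_append] at this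
      · rw [SimpleGraph.Walk.length_append, hw1, hw2]
        cases p <;> cases q <;> simp_all <;> omega

theorem dG_far {G : SimpleGraph V}
    (hfree : CFree (fun j : Fin k => SimpleGraph.cycleGraph (2 * (j : ℕ) + 3)) G)
    (u v : V) (huv : u ≠ v) : 2 * k + 3 ≤ dG k G u v false + dG k G u v true := by
  rcases dG_cases k G u v false with h1 | ⟨w1, hw1, hp1⟩
  · omega
  rcases dG_cases k G u v true with h2 | ⟨w2, hw2, hp2⟩
  · omega
  by_contra hlt
  push_neg at hlt
  set L := dG k G u v false + dG k G u v true with hL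
  have hodd : L % 2 = 1 := by norm_num at hp1 hp2; omega
  have hle : L ≤ 2 * k + 1 := by omega
  have hlen : (w1.append w2.reverse).length = L := by
    rw [SimpleGraph.Walk.length_append, SimpleGraph.Walk.length_reverse, hw1, hw2]
  refine no_short_odd_closed hfree L hodd hle ((w1.append w2.reverse).getVert) ?_ ?_
  · rw [← hlen, SimpleGraph.Walk.getVert_length, SimpleGraph.Walk.getVert_zero]
  · intro i hi
    exact (w1.append w2.reverse).adj_getVert_succ (by omega)

theorem dG_adj (G : SimpleGraph V) (u v : V) : G.Adj u v ↔ dG k G u v true = 1 := by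
  constructor
  · intro h
    have hle : dG k G u v true ≤ 1 := by
      have := dG_le_walk k G u v true (SimpleGraph.Walk.cons h SimpleGraph.Walk.nil) (by simp)
      simpa using this
    have hne : dG k G u v true ≠ 0 := by
      intro h0
      rcases dG_cases k G u v true with hc | ⟨w, hw, hpar⟩
      · omega
      · rw [h0] at hpar; simp at hpar
    omega
  · intro h
    rcases dG_cases k G u v true with hc | ⟨w, hw, hpar⟩
    · omega
    · rw [h] at hw
      have h0 := w.getVert_zero
      have h1 := w.getVert_length
      rw [hw] at h1
      have := w.adj_getVert_succ (i := 0) (by omega)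
      rwa [h0, h1] at this

end Stmt8

namespace Stmt8

private theorem bxA (s p q : Bool) : xor (xor s p) (xor s q) = xor p q := by
  cases s <;> cases p <;> cases q <;> rfl
private theorem bxA' (s p q : Bool) : xor (xor p s) (xor s q) = xor p q := by
  cases s <;> cases p <;> cases q <;> rfl
private theorem bxB (s q : Bool) : xor s (xor s q) = q := by cases s <;> cases q <;> rfl
private theorem bxC (s p q : Bool) : xor (xor s p) q = xor s (xor p q) := by
  cases s <;> cases p <;> cases q <;> rfl

/-- Axioms for a capped parity metric on an initial segment of `ℕ`. -/
structure PMet (k : ℕ) (δ : ℕ → ℕ → Bool → ℕ) (N : ℕ) : Prop where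
  range : ∀ u v p, u < N → v < N → δ u v p ≤ 2 * k + 3
  symm : ∀ u v p, u < N → v < N → δ u v p = δ v u p
  tri : ∀ u v w, u < N → v < N → w < N → u ≠ v → u ≠ w → v ≠ w →
    ∀ p q : Bool, δ u v (xor p q) ≤ δ u w p + δ w v q
  far : ∀ u v, u < N → v < N → u ≠ v → 2 * k + 3 ≤ δ u v false + δ u v true

theorem PMet.far' {k δ N} (h : PMet k δ N) {u v : ℕ} (hu : u < N) (hv : v < N)
    (huv : u ≠ v) (s : Bool) : 2 * k + 3 ≤ δ u v s + δ u v (!s) := by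
  have := h.far u v hu hv huv
  cases s <;> simp only [Bool.not_false, Bool.not_true] <;> omega

/-- Axioms for a one-point extension type `τ` over the base set `A`. -/
structure TOK (k : ℕ) (δ : ℕ → ℕ → Bool → ℕ) (A : Finset ℕ) (τ : ℕ → Bool → ℕ) : Prop where
  range : ∀ a ∈ A, ∀ p, τ a p ≤ 2 * k + 3
  far : ∀ a ∈ A, 2 * k + 3 ≤ τ a false + τ a true
  tri1 : ∀ a ∈ A, ∀ b ∈ A, a ≠ b → ∀ p q : Bool, δ a b (xor p q) ≤ τ a p + τ b q
  tri2 : ∀ a ∈ A, ∀ b ∈ A, a ≠ b → ∀ p q : Bool, τ a (xor p q) ≤ τ b p + δ b a q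

theorem TOK.far' {k δ A τ} (h : TOK k δ A τ) {a : ℕ} (ha : a ∈ A) (s : Bool) :
    2 * k + 3 ≤ τ a s + τ a (!s) := by
  have := h.far a ha
  cases s <;> simp only [Bool.not_false, Bool.not_true] <;> omega

/-- Distances from the new point of a one-point extension. -/
noncomputable def row (k : ℕ) (δ : ℕ → ℕ → Bool → ℕ) (A : Finset ℕ) (τ : ℕ → Bool → ℕ)
    (v : ℕ) (p : Bool) : ℕ :=
  if v ∈ A then τ v p
  else sInf {m | m = 2 * k + 3 ∨ ∃ a ∈ A, ∃ q : Bool, m = τ a q + δ a v (xor q p)}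

section RowLemmas

variable {k : ℕ} {δ : ℕ → ℕ → Bool → ℕ} {A : Finset ℕ} {τ : ℕ → Bool → ℕ}

theorem row_mem {v : ℕ} (hv : v ∈ A) (p : Bool) : row k δ A τ v p = τ v p := if_pos hv

theorem row_le_cap (hr : ∀ a ∈ A, ∀ p, τ a p ≤ 2 * k + 3) (v : ℕ) (p : Bool) :
    row k δ A τ v p ≤ 2 * k + 3 := by
  unfold row
  split
  · exact hr v ‹_› p
  · exact Nat.sInf_le (Or.inl rfl)

theorem row_le_comp {v : ℕ} (hv : v ∉ A) {a : ℕ} (ha : a ∈ A) (q p : Bool) :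
    row k δ A τ v p ≤ τ a q + δ a v (xor q p) := by
  unfold row
  rw [if_neg hv]
  exact Nat.sInf_le (Or.inr ⟨a, ha, q, rfl⟩)

theorem row_cases {v : ℕ} (hv : v ∉ A) (p : Bool) : row k δ A τ v p = 2 * k + 3 ∨
    ∃ a ∈ A, ∃ q : Bool, row k δ A τ v p = τ a q + δ a v (xor q p) := by
  unfold row
  rw [if_neg hv]
  have h : sInf {m | m = 2 * k + 3 ∨ ∃ a ∈ A, ∃ q : Bool, m = τ a q + δ a v (xor q p)} ∈
      {m | m = 2 * k + 3 ∨ ∃ a ∈ A, ∃ q : Bool, m = τ a q + δ a v (xor q p)} :=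
    Nat.sInf_mem ⟨2 * k + 3, Or.inl rfl⟩
  exact h

end RowLemmas

section Ext

variable {k n : ℕ} {δ : ℕ → ℕ → Bool → ℕ} {A : Finset ℕ} {τ : ℕ → Bool → ℕ}
variable (hδ : PMet k δ n) (hA : ∀ a ∈ A, a < n) (hτ : TOK k δ A τ)

include hδ hA hτ

/-- Key lemma: the new point `x` as a midpoint. -/
theorem T_mid : ∀ u v : ℕ, u < n → v < n → u ≠ v → ∀ p q : Bool,
    δ u v (xor p q) ≤ row k δ A τ u p + row k δ A τ v q := by
  -- first the case u ∈ A, v ∉ A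
  have case2 : ∀ u v : ℕ, u < n → v < n → u ≠ v → u ∈ A → v ∉ A → ∀ p q : Bool,
      δ u v (xor p q) ≤ row k δ A τ u p + row k δ A τ v q := by
    intro u v hu hv huv huA hvA p q
    rw [row_mem huA]
    have hrange := hδ.range u v (xor p q) hu hv
    rcases row_cases hvA q with hC | ⟨b, hb, s, hrow⟩
    · rw [hC]; omega
    · rw [hrow]
      by_cases hbu : b = u
      · subst hbu
        by_cases hsp : s = p
        · subst hsp
          omega
        · have hs : s = !p := by cases s <;> cases p <;> simp_all
          have := hτ.far' huA p
          rw [← hs] at this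
          omega
      · have h1 := hτ.tri1 u huA b hb (Ne.symm hbu) p s
        have h2 := hδ.tri u v b hu hv (hA b hb) huv (Ne.symm hbu)
          (fun h => hvA (h ▸ hb)) (xor p s) (xor s q)
        rw [bxA'] at h2
        omega
  intro u v hu hv huv p q
  by_cases huA : u ∈ A
  · by_cases hvA : v ∈ A
    · rw [row_mem huA, row_mem hvA]
      exact hτ.tri1 u huA v hvA huv p q
    · exact case2 u v hu hv huv huA hvA p q
  · by_cases hvA : v ∈ A
    · have := case2 v u hv hu (Ne.symm huv) hvA huA q p
      rw [hδ.symm v u _ hv hu, Bool.xor_comm q p] at this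
      omega
    · -- both outside A
      have hrange := hδ.range u v (xor p q) hu hv
      rcases row_cases huA p with hC | ⟨a, ha, s, h1⟩
      · rw [hC]; omega
      rcases row_cases hvA q with hC | ⟨b, hb, t, h2⟩
      · rw [hC]
        have := row_le_cap (τ := τ) (δ := δ) hτ.range u p
        omega
      rw [h1, h2]
      have hau : a ≠ u := fun h => huA (h ▸ ha)
      have hav : a ≠ v := fun h => hvA (h ▸ ha)
      have hbu : b ≠ u := fun h => huA (h ▸ hb)
      have hbv : b ≠ v := fun h => hvA (h ▸ hb)
      by_cases hab : a = b
      · subst hab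
        by_cases hst : s = t
        · subst hst
          have h3 := hδ.tri u v a hu hv (hA a ha) huv (Ne.symm hau) (Ne.symm hav)
            (xor s p) (xor s q)
          rw [bxA] at h3
          have hsy : δ a u (xor s p) = δ u a (xor s p) := hδ.symm a u _ (hA a ha) hu
          omega
        · have ht : t = !s := by cases s <;> cases t <;> simp_all
          have := hτ.far' ha s
          rw [← ht] at this
          omega
      · have h3 := hτ.tri1 a ha b hb hab s t
        -- δ u b (xor p t) ≤ δ u a (xor s p)... : tri (u, b, a)
        have h4 := hδ.tri u b a hu (hA b hb) (hA a ha) (Ne.symm hbu) (Ne.symm hau) (Ne.symm hab)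
          (xor s p) (xor s t)
        rw [bxA] at h4
        have h5 := hδ.tri u v b hu hv (hA b hb) huv (Ne.symm hbu) (Ne.symm hbv)
          (xor p t) (xor t q)
        rw [bxA'] at h5
        have hsy : δ a u (xor s p) = δ u a (xor s p) := hδ.symm a u _ (hA a ha) hu
        omega

/-- Key lemma: the new point `x` as an endpoint. -/
theorem T_end : ∀ v w : ℕ, v < n → w < n → v ≠ w → ∀ p q : Bool,
    row k δ A τ v (xor p q) ≤ row k δ A τ w p + δ w v q := by
  intro v w hv hw hvw p q
  by_cases hvA : v ∈ A
  · rw [row_mem hvA]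
    by_cases hwA : w ∈ A
    · rw [row_mem hwA]
      exact hτ.tri2 v hvA w hwA hvw p q
    · have hrange := hτ.range v hvA (xor p q)
      rcases row_cases hwA p with hC | ⟨b, hb, s, hrow⟩
      · rw [hC]; omega
      rw [hrow]
      have hbw : b ≠ w := fun h => hwA (h ▸ hb)
      by_cases hbv : b = v
      · subst hbv
        by_cases hs : s = xor p q
        · subst hs; omega
        · have hs' : s = !(xor p q) := by cases s <;> cases p <;> cases q <;> simp_all
          have hx : xor s p = !q := by subst hs'; cases p <;> cases q <;> rfl
          have hfar := hδ.far' hv hw hvw (xor s p)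
          rw [hx, Bool.not_not] at hfar
          rw [hx]
          have hsy : δ w b q = δ b w q := hδ.symm w b q hw hv
          omega
      · have h1 := hτ.tri2 v hvA b hb (Ne.symm hbv) s (xor s (xor p q))
        rw [bxB] at h1
        have h2 := hδ.tri b v w (hA b hb) hv hw hbv hbw hvw (xor s p) q
        rw [bxC] at h2
        omega
  · by_cases hwA : w ∈ A
    · rw [row_mem hwA]
      have h1 := row_le_comp (k := k) (δ := δ) (τ := τ) hvA hwA p (xor p q)
      rw [bxB] at h1
      exact h1
    · rcases row_cases hwA p with hC | ⟨b, hb, s, hrow⟩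
      · rw [hC]
        have := row_le_cap (τ := τ) (δ := δ) hτ.range v (xor p q)
        omega
      · rw [hrow]
        have hbv : b ≠ v := fun h => hvA (h ▸ hb)
        have hbw : b ≠ w := fun h => hwA (h ▸ hb)
        have h1 := row_le_comp (k := k) (δ := δ) (τ := τ) hvA hb s (xor p q)
        have h2 := hδ.tri b v w (hA b hb) hv hw hbv hbw hvw (xor s p) q
        rw [bxC] at h2
        omega

end Ext

end Stmt8

namespace Stmt8

section Ext2

variable {k n : ℕ} {δ : ℕ → ℕ → Bool → ℕ} {A : Finset ℕ} {τ : ℕ → Bool → ℕ}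
variable (hδ : PMet k δ n) (hA : ∀ a ∈ A, a < n) (hτ : TOK k δ A τ)

include hδ hA hτ

theorem far_new : ∀ v : ℕ, v < n →
    2 * k + 3 ≤ row k δ A τ v false + row k δ A τ v true := by
  intro v hv
  by_cases hvA : v ∈ A
  · rw [row_mem hvA, row_mem hvA]
    exact hτ.far v hvA
  · rcases row_cases hvA false with hC | ⟨a, ha, q1, h1⟩
    · rw [hC]; omega
    rcases row_cases hvA true with hC | ⟨b, hb, q2, h2⟩
    · rw [hC]
      have := row_le_cap (τ := τ) (δ := δ) hτ.range v false
      omega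
    rw [h1, h2]
    have hav : a ≠ v := fun h => hvA (h ▸ ha)
    have hbv : b ≠ v := fun h => hvA (h ▸ hb)
    rw [Bool.xor_false] at h1
    rw [Bool.xor_true] at h2
    rw [Bool.xor_false, Bool.xor_true]
    by_cases hab : a = b
    · subst hab
      by_cases hq : q1 = q2
      · subst hq
        have := hδ.far' (hA a ha) hv hav q1
        omega
      · have hq2 : q2 = !q1 := by cases q1 <;> cases q2 <;> simp_all
        have := hτ.far' ha q1
        rw [← hq2] at this
        omega
    · have h3 := hτ.tri1 a ha b hb hab q1 q2
      have h4 := hδ.tri a b v (hA a ha) (hA b hb) hv hab hav hbv q1 (!q2)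
      have hxx : xor q1 (!q2) = !(xor q1 q2) := by cases q1 <;> cases q2 <;> rfl
      rw [hxx] at h4
      have h5 := hδ.far' (hA a ha) (hA b hb) hab (xor q1 q2)
      have hsy : δ v b (!q2) = δ b v (!q2) := hδ.symm v b _ hv (hA b hb)
      omega

end Ext2

/-- The one-point extension of `δ` at the new vertex `n`. -/
noncomputable def ext (k : ℕ) (δ : ℕ → ℕ → Bool → ℕ) (n : ℕ) (A : Finset ℕ)
    (τ : ℕ → Bool → ℕ) : ℕ → ℕ → Bool → ℕ :=
  fun u v p =>
    if u = n then (if v = n then 0 else row k δ A τ v p)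
    else if v = n then row k δ A τ u p
    else δ u v p

theorem ext_old {k n : ℕ} {δ : ℕ → ℕ → Bool → ℕ} {A : Finset ℕ} {τ : ℕ → Bool → ℕ}
    {u v : ℕ} (hu : u ≠ n) (hv : v ≠ n) (p : Bool) :
    ext k δ n A τ u v p = δ u v p := by
  simp [ext, hu, hv]

theorem ext_new {k n : ℕ} {δ : ℕ → ℕ → Bool → ℕ} {A : Finset ℕ} {τ : ℕ → Bool → ℕ}
    {v : ℕ} (hv : v ≠ n) (p : Bool) :
    ext k δ n A τ n v p = row k δ A τ v p := by
  simp [ext, hv]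

theorem ext_new' {k n : ℕ} {δ : ℕ → ℕ → Bool → ℕ} {A : Finset ℕ} {τ : ℕ → Bool → ℕ}
    {v : ℕ} (hv : v ≠ n) (p : Bool) :
    ext k δ n A τ v n p = row k δ A τ v p := by
  simp [ext, hv]

theorem ext_PMet {k n : ℕ} {δ : ℕ → ℕ → Bool → ℕ} {A : Finset ℕ} {τ : ℕ → Bool → ℕ}
    (hδ : PMet k δ n) (hA : ∀ a ∈ A, a < n) (hτ : TOK k δ A τ) :
    PMet k (ext k δ n A τ) (n + 1) := by
  have hlt : ∀ m : ℕ, m < n + 1 → m ≠ n → m < n := by omega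
  constructor
  · -- range
    intro u v p hu hv
    by_cases hun : u = n
    · by_cases hvn : v = n
      · rw [hun, hvn]; simp [ext]
      · rw [hun, ext_new hvn]
        exact row_le_cap hτ.range v p
    · by_cases hvn : v = n
      · rw [hvn, ext_new' hun]
        exact row_le_cap hτ.range u p
      · rw [ext_old hun hvn]
        exact hδ.range u v p (hlt u hu hun) (hlt v hv hvn)
  · -- symm
    intro u v p hu hv
    by_cases hun : u = n
    · by_cases hvn : v = n
      · rw [hun, hvn]
      · rw [hun, ext_new hvn, ext_new' hvn]
    · by_cases hvn : v = n
      · rw [hvn, ext_new hun, ext_new' hun]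
      · rw [ext_old hun hvn, ext_old hvn hun]
        exact hδ.symm u v p (hlt u hu hun) (hlt v hv hvn)
  · -- tri
    intro u v w hu hv hw huv huw hvw p q
    by_cases hun : u = n
    · -- u is the new point
      have hvn : v ≠ n := fun h => huv (hun.trans h.symm)
      have hwn : w ≠ n := fun h => huw (hun.trans h.symm)
      have hv' := hlt v hv hvn
      have hw' := hlt w hw hwn
      rw [hun, ext_new hvn, ext_new hwn, ext_old hwn hvn]
      exact T_end hδ hA hτ v w hv' hw' (fun h => hvw h) p q
    · by_cases hvn : v = n
      · have hwn : w ≠ n := fun h => hvw (hvn.trans h.symm)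
        have hu' := hlt u hu hun
        have hw' := hlt w hw hwn
        rw [hvn, ext_new' hun, ext_old hun hwn, ext_new' hwn]
        have h1 := T_end hδ hA hτ u w hu' hw' huw q p
        have hsy : δ w u p = δ u w p := hδ.symm w u p hw' hu'
        rw [Bool.xor_comm q p] at h1
        omega
      · by_cases hwn : w = n
        · have hu' := hlt u hu hun
          have hv' := hlt v hv hvn
          rw [hwn, ext_old hun hvn, ext_new' hun, ext_new hvn]
          exact T_mid hδ hA hτ u v hu' hv' huv p q
        · rw [ext_old hun hvn, ext_old hun hwn, ext_old hwn hvn]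
          exact hδ.tri u v w (hlt u hu hun) (hlt v hv hvn) (hlt w hw hwn) huv huw hvw p q
  · -- far
    intro u v hu hv huv
    by_cases hun : u = n
    · have hvn : v ≠ n := fun h => huv (hun.trans h.symm)
      rw [hun, ext_new hvn, ext_new hvn]
      exact far_new hδ hA hτ v (hlt v hv hvn)
    · by_cases hvn : v = n
      · rw [hvn, ext_new' hun, ext_new' hun]
        exact far_new hδ hA hτ u (hlt u hu hun)
      · rw [ext_old hun hvn, ext_old hun hvn]
        exact hδ.far u v (hlt u hu hun) (hlt v hv hvn) huv

theorem ext_row {k n : ℕ} {δ : ℕ → ℕ → Bool → ℕ} {A : Finset ℕ} {τ : ℕ → Bool → ℕ}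
    (hA : ∀ a ∈ A, a < n) {a : ℕ} (ha : a ∈ A) (p : Bool) :
    ext k δ n A τ n a p = τ a p := by
  rw [ext_new (by have := hA a ha; omega), row_mem ha]

end Stmt8

namespace Stmt8

/-- Decoding of a finitely-coded extension type. -/
noncomputable def decodeTau (c : Finset ℕ × List (ℕ × ℕ)) : ℕ → Bool → ℕ :=
  fun v p =>
    let l := c.1.sort (· ≤ ·)
    let pr := c.2.getD (l.idxOf v) (0, 0)
    if p then pr.2 else pr.1

theorem decodeTau_spec (A : Finset ℕ) (τ : ℕ → Bool → ℕ) :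
    ∃ c : Finset ℕ × List (ℕ × ℕ), c.1 = A ∧ ∀ a ∈ A, ∀ p, decodeTau c a p = τ a p := by
  refine ⟨⟨A, (A.sort (· ≤ ·)).map (fun a => (τ a false, τ a true))⟩, rfl, ?_⟩
  intro a ha p
  have hmem : a ∈ A.sort (· ≤ ·) := (Finset.mem_sort _).2 ha
  have hlt : (A.sort (· ≤ ·)).idxOf a < (A.sort (· ≤ ·)).length :=
    List.idxOf_lt_length_iff.2 hmem
  unfold decodeTau
  simp only
  rw [List.getD_eq_getElem _ _ (by simpa using hlt), List.getElem_map, List.getElem_idxOf]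
  cases p <;> rfl

/-- A fixed enumeration of extension tasks hitting every task at arbitrarily late stages. -/
theorem tasks_exist : ∃ tk : ℕ → Finset ℕ × (ℕ → Bool → ℕ),
    ∀ (A : Finset ℕ) (τ : ℕ → Bool → ℕ) (N : ℕ), ∃ n, N ≤ n ∧ (tk n).1 = A ∧
      ∀ a ∈ A, ∀ p, (tk n).2 a p = τ a p := by
  obtain ⟨s, hs⟩ := exists_surjective_nat (Finset ℕ × List (ℕ × ℕ))
  refine ⟨fun n => ((s (Nat.unpair n).2).1, decodeTau (s (Nat.unpair n).2)), ?_⟩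
  intro A τ N
  obtain ⟨c, hc1, hc2⟩ := decodeTau_spec A τ
  obtain ⟨m, hm⟩ := hs c
  refine ⟨Nat.pair N m, Nat.left_le_pair N m, ?_, ?_⟩
  · show (s (Nat.unpair (Nat.pair N m)).2).1 = A
    rw [Nat.unpair_pair, hm, hc1]
  · intro a ha p
    show decodeTau (s (Nat.unpair (Nat.pair N m)).2) a p = τ a p
    rw [Nat.unpair_pair, hm]
    exact hc2 a ha p

/-- The fixed enumeration of tasks. -/
noncomputable def tk : ℕ → Finset ℕ × (ℕ → Bool → ℕ) := tasks_exist.choose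

theorem tk_spec : ∀ (A : Finset ℕ) (τ : ℕ → Bool → ℕ) (N : ℕ), ∃ n, N ≤ n ∧ (tk n).1 = A ∧
    ∀ a ∈ A, ∀ p, (tk n).2 a p = τ a p := tasks_exist.choose_spec

open Classical in
/-- The stages of the construction of the universal capped parity metric on `ℕ`. -/
noncomputable def mat (k : ℕ) : ℕ → (ℕ → ℕ → Bool → ℕ)
  | 0 => fun _ _ _ => 0
  | n + 1 =>
    if (∀ a ∈ (tk n).1, a < n) ∧ TOK k (mat k n) (tk n).1 (tk n).2 then
      ext k (mat k n) n (tk n).1 (tk n).2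
    else
      ext k (mat k n) n ∅ (fun _ _ => 0)

theorem mat_PMet (k : ℕ) : ∀ n, PMet k (mat k n) n := by
  intro n
  induction n with
  | zero => exact ⟨fun u v p hu => absurd hu (by omega), fun u v p hu => absurd hu (by omega),
      fun u v w hu => absurd hu (by omega), fun u v hu => absurd hu (by omega)⟩
  | succ n ih =>
    rw [mat]
    split
    · next h => exact ext_PMet ih h.1 h.2
    · refine ext_PMet ih (by simp) ?_
      exact ⟨by simp, by simp, by simp, by simp⟩

theorem mat_agree (k : ℕ) (n : ℕ) {u v : ℕ} (hu : u < n) (hv : v < n) (p : Bool) :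
    mat k (n + 1) u v p = mat k n u v p := by
  rw [mat]
  split <;> exact ext_old (by omega) (by omega) p

theorem mat_stable (k : ℕ) {m n : ℕ} (hmn : m ≤ n) {u v : ℕ} (hu : u < m) (hv : v < m)
    (p : Bool) : mat k n u v p = mat k m u v p := by
  induction n with
  | zero => omega
  | succ n ih =>
    rcases Nat.lt_or_ge m (n + 1) with h | h
    · rw [mat_agree k n (by omega) (by omega), ih (by omega)]
    · have : m = n + 1 := by omega
      rw [this]

/-- The universal capped parity metric. -/
noncomputable def dU (k : ℕ) (u v : ℕ) (p : Bool) : ℕ := mat k (max u v + 1) u v p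

theorem dU_eq (k : ℕ) {n u v : ℕ} (hu : u < n) (hv : v < n) (p : Bool) :
    dU k u v p = mat k n u v p := by
  unfold dU
  rcases Nat.le_total (max u v + 1) n with h | h
  · rw [mat_stable k h (by omega) (by omega)]
  · rw [mat_stable k h hu hv]

theorem dU_range (k : ℕ) (u v : ℕ) (p : Bool) : dU k u v p ≤ 2 * k + 3 :=
  (mat_PMet k (max u v + 1)).range u v p (by omega) (by omega)

theorem dU_symm (k : ℕ) (u v : ℕ) (p : Bool) : dU k u v p = dU k v u p := by
  rw [dU_eq k (n := max u v + 1) (by omega) (by omega),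
    dU_eq k (n := max u v + 1) (by omega) (by omega)]
  exact (mat_PMet k _).symm u v p (by omega) (by omega)

theorem dU_tri (k : ℕ) (u v w : ℕ) (huv : u ≠ v) (huw : u ≠ w) (hvw : v ≠ w) (p q : Bool) :
    dU k u v (xor p q) ≤ dU k u w p + dU k w v q := by
  set N := max u (max v w) + 1 with hN
  rw [dU_eq k (n := N) (by omega) (by omega), dU_eq k (n := N) (by omega) (by omega),
    dU_eq k (n := N) (by omega) (by omega)]
  exact (mat_PMet k N).tri u v w (by omega) (by omega) (by omega) huv huw hvw p q

theorem dU_far (k : ℕ) (u v : ℕ) (huv : u ≠ v) :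
    2 * k + 3 ≤ dU k u v false + dU k u v true := by
  rw [dU_eq k (n := max u v + 1) (by omega) (by omega),
    dU_eq k (n := max u v + 1) (by omega) (by omega)]
  exact (mat_PMet k _).far u v (by omega) (by omega) huv

/-- Realization of any valid type over a finite subset of the universal structure. -/
theorem dU_realize (k : ℕ) (A : Finset ℕ) (τ : ℕ → Bool → ℕ) (N : ℕ)
    (hτ : TOK k (dU k) A τ) :
    ∃ x : ℕ, N ≤ x ∧ (∀ a ∈ A, a < x) ∧ ∀ a ∈ A, ∀ p,
      dU k x a p = τ a p ∧ dU k a x p = τ a p := by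
  set M := max N ((A.sup id) + 1) with hM
  obtain ⟨n, hn, htk1, htk2⟩ := tk_spec A τ M
  have hMN : N ≤ M := le_max_left _ _
  have hMA : (A.sup id) + 1 ≤ M := le_max_right _ _
  have hAn : ∀ a ∈ A, a < n := by
    intro a ha
    have : a ≤ A.sup id := by simpa using Finset.le_sup (f := id) ha
    omega
  have hTOK : TOK k (mat k n) (tk n).1 (tk n).2 := by
    rw [htk1]
    constructor
    · intro a ha p
      rw [htk2 a ha p]
      exact hτ.range a ha p
    · intro a ha
      rw [htk2 a ha false, htk2 a ha true]
      exact hτ.far a ha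
    · intro a ha b hb hab p q
      rw [htk2 a ha p, htk2 b hb q, ← dU_eq k (hAn a ha) (hAn b hb)]
      exact hτ.tri1 a ha b hb hab p q
    · intro a ha b hb hab p q
      rw [htk2 a ha _, htk2 b hb p, ← dU_eq k (hAn b hb) (hAn a ha)]
      exact hτ.tri2 a ha b hb hab p q
  have hcond : (∀ a ∈ (tk n).1, a < n) ∧ TOK k (mat k n) (tk n).1 (tk n).2 := by
    rw [htk1]
    exact ⟨hAn, htk1 ▸ hTOK⟩
  refine ⟨n, by omega, hAn, ?_⟩
  intro a ha p
  have h1 : dU k n a p = τ a p := by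
    rw [dU_eq k (n := n + 1) (by omega) (by have := hAn a ha; omega) p, mat, if_pos hcond]
    have : ext k (mat k n) n (tk n).1 (tk n).2 n a p = (tk n).2 a p :=
      ext_row (htk1 ▸ hAn) (htk1 ▸ ha) p
    rw [this, htk2 a ha p]
  exact ⟨h1, by rw [dU_symm]; exact h1⟩

end Stmt8

namespace Stmt8

/-- The universal graph: adjacency is declared parity-distance one. -/
noncomputable def GU (k : ℕ) : SimpleGraph ℕ where
  Adj u v := u ≠ v ∧ dU k u v true = 1
  symm := ⟨by
    intro u v ⟨h1, h2⟩
    exact ⟨h1.symm, by rw [dU_symm]; exact h2⟩⟩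
  loopless := ⟨fun u h => h.1 rfl⟩

theorem GU_adj (k : ℕ) {u v : ℕ} : (GU k).Adj u v ↔ u ≠ v ∧ dU k u v true = 1 := Iff.rfl

theorem GU_cfree (k : ℕ) :
    CFree (fun j : Fin k => SimpleGraph.cycleGraph (2 * (j : ℕ) + 3)) (GU k) := by
  intro j hsub
  obtain ⟨m, hodd, hm3, hmle, f, hf⟩ :
      ∃ m, m % 2 = 1 ∧ 3 ≤ m ∧ m ≤ 2 * k + 1 ∧ ∃ f : Fin m ↪ ℕ,
        ∀ u v, (SimpleGraph.cycleGraph m).Adj u v → (GU k).Adj (f u) (f v) := by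
    obtain ⟨f, hf⟩ := hsub
    exact ⟨2 * (j : ℕ) + 3, by omega, by omega, by have := j.isLt; omega, f, hf⟩
  clear hsub
  -- the cycle as a function ℕ → ℕ
  set c : ℕ → ℕ := fun i => if h : i < m then f ⟨i, h⟩ else 0 with hc
  have hcf : ∀ i (h : i < m), c i = f ⟨i, h⟩ := fun i h => dif_pos h
  have hinj : ∀ i jj, i < jj → jj < m → c i ≠ c jj := by
    intro i jj hij hjm
    rw [hcf i (by omega), hcf jj hjm]
    intro h
    have := f.injective h
    rw [Fin.mk.injEq] at this
    omega
  have hcyc_adj : ∀ (a b : Fin m), (m - (a : ℕ) + (b : ℕ)) % m = 1 →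
      (SimpleGraph.cycleGraph m).Adj a b := by
    intro a b hab
    rw [SimpleGraph.cycleGraph_adj']
    right
    rw [Fin.sub_def]
    exact hab
  have hstep : ∀ i, i + 1 < m → dU k (c i) (c (i + 1)) true = 1 := by
    intro i hi
    rw [hcf i (by omega), hcf (i + 1) hi]
    refine ((GU_adj k).1 (hf ⟨i, by omega⟩ ⟨i + 1, hi⟩ (hcyc_adj ⟨i, by omega⟩ ⟨i + 1, hi⟩ ?_))).2
    rw [show m - i + (i + 1) = m + 1 by omega, Nat.add_comm m 1, Nat.add_mod_right,
      Nat.mod_eq_of_lt (by omega)]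
  have hlast : dU k (c (m - 1)) (c 0) true = 1 := by
    rw [hcf (m - 1) (by omega), hcf 0 (by omega)]
    refine ((GU_adj k).1 (hf ⟨m - 1, by omega⟩ ⟨0, by omega⟩ (hcyc_adj ⟨m - 1, by omega⟩ ⟨0, by omega⟩ ?_))).2
    rw [show m - (m - 1) + 0 = 1 by omega, Nat.mod_eq_of_lt (by omega)]
  -- the chain bound
  have chain : ∀ i, 1 ≤ i → i < m → ∀ p : Bool, (i % 2 = if p then 1 else 0) →
      dU k (c 0) (c i) p ≤ i := by
    intro i
    induction i with
    | zero => intro h; exact absurd h (by omega)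
    | succ i ih =>
      intro h1 hlt p hp
      rcases Nat.eq_zero_or_pos i with h0 | h0
      · subst h0
        have hpt : p = true := by cases p <;> simp_all
        subst hpt
        exact le_of_eq (hstep 0 (by omega))
      · have hq : (i % 2 = if !p then 1 else 0) := by cases p <;> simp_all <;> omega
        have ihh := ih (by omega) (by omega) (!p) hq
        have hadj := hstep i (by omega)
        have htri := dU_tri k (c 0) (c (i + 1)) (c i)
          (hinj 0 (i + 1) (by omega) (by omega))
          (hinj 0 i (by omega) (by omega))
          (fun h => hinj i (i + 1) (by omega) (by omega) h.symm)
          (!p) true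
        have hxor : xor (!p) true = p := by cases p <;> rfl
        rw [hxor] at htri
        omega
  have h1 := chain (m - 1) (by omega) (by omega) false (by show (m - 1) % 2 = 0; omega)
  have hfar := dU_far k (c 0) (c (m - 1)) (hinj 0 (m - 1) (by omega) (by omega))
  have hsy : dU k (c (m - 1)) (c 0) true = dU k (c 0) (c (m - 1)) true := dU_symm k _ _ _
  omega

end Stmt8

namespace Stmt8

section Embed

variable (k : ℕ) {W : Type} (H : SimpleGraph W) (g : ℕ → W)

/-- Extension type over the image of the first `n` enumerated vertices. -/
noncomputable def tauOf (F : ℕ → ℕ) (n : ℕ) (v : ℕ) (p : Bool) : ℕ :=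
  sInf {d | ∃ m, m < n ∧ F m = v ∧ d = dG k H (g n) (g m) p}

theorem tauOf_congr {F F' : ℕ → ℕ} {n : ℕ} (hFF : ∀ m, m < n → F m = F' m) :
    tauOf k H g F n = tauOf k H g F' n := by
  funext v p
  unfold tauOf
  congr 1
  ext d
  constructor
  · rintro ⟨m, hm, hFm, hd⟩; exact ⟨m, hm, (hFF m hm) ▸ hFm, hd⟩
  · rintro ⟨m, hm, hFm, hd⟩; exact ⟨m, hm, (hFF m hm).symm ▸ hFm, hd⟩

open Classical in
/-- One step of the embedding construction. -/
noncomputable def stepF (n : ℕ) (F : ℕ → ℕ) : ℕ → ℕ :=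
  Function.update F n <|
    if h : ∃ m, m < n ∧ g m = g n then F (Nat.find h)
    else if h2 : TOK k (dU k) ((Finset.range n).image F) (tauOf k H g F n) then
      (dU_realize k _ _ 0 h2).choose
    else 0

noncomputable def fseq : ℕ → (ℕ → ℕ)
  | 0 => fun _ => 0
  | n + 1 => stepF k H g n (fseq n)

noncomputable def FF (n : ℕ) : ℕ := fseq k H g (n + 1) n

theorem fseq_coh : ∀ {m n : ℕ}, m < n → fseq k H g n m = FF k H g m := by
  intro m n
  induction n with
  | zero => omega
  | succ n ih =>
    intro hmn
    rcases Nat.lt_or_ge m n with h | h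
    · have : fseq k H g (n + 1) m = fseq k H g n m := by
        show stepF k H g n (fseq k H g n) m = _
        unfold stepF
        rw [Function.update_of_ne (by omega)]
      rw [this, ih h]
    · have : m = n := by omega
      subst this
      rfl

open Classical in
theorem FF_eq (n : ℕ) : FF k H g n =
    (if h : ∃ m, m < n ∧ g m = g n then FF k H g (Nat.find h)
     else if h2 : TOK k (dU k) ((Finset.range n).image (FF k H g)) (tauOf k H g (FF k H g) n)
       then (dU_realize k _ _ 0 h2).choose else 0) := by
  have himg : (Finset.range n).image (fseq k H g n) = (Finset.range n).image (FF k H g) :=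
    Finset.image_congr (fun x hx => fseq_coh k H g (Finset.mem_range.1 hx))
  have htau : tauOf k H g (fseq k H g n) n = tauOf k H g (FF k H g) n :=
    tauOf_congr k H g (fun m hm => fseq_coh k H g hm)
  show stepF k H g n (fseq k H g n) n = _
  unfold stepF
  rw [Function.update_self]
  by_cases h : ∃ m, m < n ∧ g m = g n
  · rw [dif_pos h, dif_pos h, fseq_coh k H g (Nat.find_spec h).1]
  · rw [dif_neg h, dif_neg h]
    simp only [himg, htau]

/-- The invariant of the embedding construction. -/
def Inv (n : ℕ) : Prop :=
  (∀ i j, i < n → j < n → (FF k H g i = FF k H g j ↔ g i = g j)) ∧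
  (∀ i j, i < n → j < n → g i ≠ g j → ∀ p,
    dU k (FF k H g i) (FF k H g j) p = dG k H (g i) (g j) p)

theorem inv_all (hfree : CFree (fun j : Fin k => SimpleGraph.cycleGraph (2 * (j : ℕ) + 3)) H) :
    ∀ n, Inv k H g n := by
  intro n
  induction n with
  | zero => exact ⟨fun i j hi => absurd hi (by omega), fun i j hi => absurd hi (by omega)⟩
  | succ n ih =>
    obtain ⟨ih1, ih2⟩ := ih
    classical
    -- facts about FF n
    by_cases h : ∃ m, m < n ∧ g m = g n
    · -- repeated vertex
      have hFFn : FF k H g n = FF k H g (Nat.find h) := by rw [FF_eq]; rw [dif_pos h]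
      obtain ⟨hm0n, hgm0⟩ := Nat.find_spec h
      set m0 := Nat.find h
      constructor
      · intro i j hi hj
        rcases Nat.lt_or_ge i n with hi' | hi'
        · rcases Nat.lt_or_ge j n with hj' | hj'
          · exact ih1 i j hi' hj'
          · have hjn : n = j := by omega
            subst hjn
            rw [hFFn, ← hgm0]
            exact ih1 i m0 hi' hm0n
        · have hin : n = i := by omega
          subst hin
          rcases Nat.lt_or_ge j n with hj' | hj'
          · rw [hFFn, ← hgm0]
            exact ih1 m0 j hm0n hj'
          · have hjn : n = j := by omega
            subst hjn
            exact iff_of_true rfl rfl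
      · intro i j hi hj hgij p
        rcases Nat.lt_or_ge i n with hi' | hi'
        · rcases Nat.lt_or_ge j n with hj' | hj'
          · exact ih2 i j hi' hj' hgij p
          · have hjn : n = j := by omega
            subst hjn
            rw [hFFn, ih2 i m0 hi' hm0n (by rw [hgm0]; exact hgij) p, hgm0]
        · have hin : n = i := by omega
          subst hin
          rcases Nat.lt_or_ge j n with hj' | hj'
          · rw [hFFn, ih2 m0 j hm0n hj' (by rw [hgm0]; exact fun hh => hgij hh) p, hgm0]
          · have hjn : n = j := by omega
            subst hjn
            exact absurd rfl hgij
    · -- new vertex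
      have htok : TOK k (dU k) ((Finset.range n).image (FF k H g)) (tauOf k H g (FF k H g) n) := by
        have tau_val : ∀ m, m < n → ∀ p, tauOf k H g (FF k H g) n (FF k H g m) p =
            dG k H (g n) (g m) p := by
          intro m hm p
          have hne : {d | ∃ m', m' < n ∧ FF k H g m' = FF k H g m ∧
              d = dG k H (g n) (g m') p}.Nonempty := ⟨dG k H (g n) (g m) p, m, hm, rfl, rfl⟩
          have hmem := Nat.sInf_mem hne
          obtain ⟨m', hm', hFm', hd⟩ := hmem
          show sInf _ = _
          rw [hd]
          congr 1
          exact (ih1 m' m hm' hm).1 hFm'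
        constructor
        · intro a ha p
          obtain ⟨m, hm, hFm⟩ := Finset.mem_image.1 ha
          rw [← hFm, tau_val m (Finset.mem_range.1 hm) p]
          exact dG_le_cap k H (g n) (g m) p
        · intro a ha
          obtain ⟨m, hm, hFm⟩ := Finset.mem_image.1 ha
          rw [← hFm, tau_val m (Finset.mem_range.1 hm) false, tau_val m (Finset.mem_range.1 hm) true]
          exact dG_far k hfree (g n) (g m) (fun hh => h ⟨m, Finset.mem_range.1 hm, hh.symm⟩)
        · intro a ha b hb hab p q
          obtain ⟨m, hm, hFm⟩ := Finset.mem_image.1 ha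
          obtain ⟨m', hm', hFm'⟩ := Finset.mem_image.1 hb
          rw [← hFm, ← hFm', tau_val m (Finset.mem_range.1 hm) p,
            tau_val m' (Finset.mem_range.1 hm') q]
          have hgmm : g m ≠ g m' := by
            intro hh
            exact hab (hFm ▸ hFm' ▸ ((ih1 m m' (Finset.mem_range.1 hm)
              (Finset.mem_range.1 hm')).2 hh))
          rw [ih2 m m' (Finset.mem_range.1 hm) (Finset.mem_range.1 hm') hgmm (xor p q)]
          have := dG_tri k H (g m) (g m') (g n) p q
          rw [dG_symm k H (g m) (g n) p] at this
          exact this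
        · intro a ha b hb hab p q
          obtain ⟨m, hm, hFm⟩ := Finset.mem_image.1 ha
          obtain ⟨m', hm', hFm'⟩ := Finset.mem_image.1 hb
          rw [← hFm, ← hFm', tau_val m (Finset.mem_range.1 hm) (xor p q),
            tau_val m' (Finset.mem_range.1 hm') p]
          have hgmm : g m' ≠ g m := by
            intro hh
            apply hab
            rw [← hFm, ← hFm']
            exact ((ih1 m' m (Finset.mem_range.1 hm') (Finset.mem_range.1 hm)).2 hh).symm
          rw [ih2 m' m (Finset.mem_range.1 hm') (Finset.mem_range.1 hm) hgmm q]
          exact dG_tri k H (g n) (g m) (g m') p q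
      have hFFn : FF k H g n = (dU_realize k _ _ 0 htok).choose := by
        rw [FF_eq, dif_neg h, dif_pos htok]
      obtain ⟨-, hfresh, hrow⟩ := (dU_realize k _ _ 0 htok).choose_spec
      rw [← hFFn] at hfresh hrow
      have hmemA : ∀ m, m < n → FF k H g m ∈ (Finset.range n).image (FF k H g) :=
        fun m hm => Finset.mem_image.2 ⟨m, Finset.mem_range.2 hm, rfl⟩
      have tau_val : ∀ m, m < n → ∀ p, tauOf k H g (FF k H g) n (FF k H g m) p =
          dG k H (g n) (g m) p := by
        intro m hm p
        have hne : {d | ∃ m', m' < n ∧ FF k H g m' = FF k H g m ∧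
            d = dG k H (g n) (g m') p}.Nonempty := ⟨dG k H (g n) (g m) p, m, hm, rfl, rfl⟩
        have hmem := Nat.sInf_mem hne
        obtain ⟨m', hm', hFm', hd⟩ := hmem
        show sInf _ = _
        rw [hd]
        congr 1
        exact (ih1 m' m hm' hm).1 hFm'
      have hnewne : ∀ m, m < n → FF k H g n ≠ FF k H g m := by
        intro m hm heq
        have := hfresh _ (hmemA m hm)
        omega
      have hgnew : ∀ m, m < n → g n ≠ g m := by
        intro m hm heq
        exact h ⟨m, hm, heq.symm⟩
      constructor
      · intro i j hi hj
        rcases Nat.lt_or_ge i n with hi' | hi'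
        · rcases Nat.lt_or_ge j n with hj' | hj'
          · exact ih1 i j hi' hj'
          · have hjn : n = j := by omega
            subst hjn
            constructor
            · intro hh; exact absurd hh.symm (hnewne i hi')
            · intro hh; exact absurd hh.symm (hgnew i hi')
        · have hin : n = i := by omega
          subst hin
          rcases Nat.lt_or_ge j n with hj' | hj'
          · constructor
            · intro hh; exact absurd hh (hnewne j hj')
            · intro hh; exact absurd hh (hgnew j hj')
          · have hjn : n = j := by omega
            subst hjn
            exact iff_of_true rfl rfl
      · intro i j hi hj hgij p
        rcases Nat.lt_or_ge i n with hi' | hi'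
        · rcases Nat.lt_or_ge j n with hj' | hj'
          · exact ih2 i j hi' hj' hgij p
          · have hjn : n = j := by omega
            subst hjn
            have := (hrow _ (hmemA i hi') p).2
            rw [tau_val i hi' p] at this
            rw [this, dG_symm]
        · have hin : n = i := by omega
          subst hin
          rcases Nat.lt_or_ge j n with hj' | hj'
          · have := (hrow _ (hmemA j hj') p).1
            rw [tau_val j hj' p] at this
            rw [this]
          · have hjn : n = j := by omega
            subst hjn
            exact absurd rfl hgij

theorem embeds (hfree : CFree (fun j : Fin k => SimpleGraph.cycleGraph (2 * (j : ℕ) + 3)) H)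
    (hg : Function.Surjective g) : Nonempty (H ↪g GU k) := by
  classical
  have inv := inv_all k H g hfree
  set φ : W → ℕ := fun v => FF k H g (Nat.find (hg v)) with hφ
  have hgφ : ∀ v, g (Nat.find (hg v)) = v := fun v => Nat.find_spec (hg v)
  have hinj : Function.Injective φ := by
    intro v w hvw
    have h1 := ((inv (max (Nat.find (hg v)) (Nat.find (hg w)) + 1)).1
      (Nat.find (hg v)) (Nat.find (hg w)) (by omega) (by omega)).1 hvw
    rw [hgφ v, hgφ w] at h1
    exact h1
  refine ⟨⟨⟨φ, hinj⟩, ?_⟩⟩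
  intro v w
  show (GU k).Adj (φ v) (φ w) ↔ H.Adj v w
  by_cases hvw : v = w
  · subst hvw
    simp only [SimpleGraph.irrefl]
  · have hgvw : g (Nat.find (hg v)) ≠ g (Nat.find (hg w)) := by
      rw [hgφ v, hgφ w]; exact hvw
    have hd := (inv (max (Nat.find (hg v)) (Nat.find (hg w)) + 1)).2
      (Nat.find (hg v)) (Nat.find (hg w)) (by omega) (by omega) hgvw true
    rw [hgφ v, hgφ w] at hd
    constructor
    · intro hh
      exact (dG_adj k H v w).2 (by rw [← hd]; exact ((GU_adj k).1 hh).2)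
    · intro hh
      refine (GU_adj k).2 ⟨fun heq => hvw (hinj heq), ?_⟩
      rw [hd]
      exact (dG_adj k H v w).1 hh

end Embed

end Stmt8


/-- for the family of odd cycles `C₃, C₅, …, C_{2k+1}`, there is a universal
countable graph omitting them all. -/
theorem stmt_8 (k : ℕ) (hk : 1 ≤ k) :
    ExistsUniversal (fun j : Fin k => SimpleGraph.cycleGraph (2 * (j : ℕ) + 3)) := by
  refine ⟨ℕ, Stmt8.GU k, inferInstance, Stmt8.GU_cfree k, ?_⟩
  intro W H hW hfree
  cases isEmpty_or_nonempty W with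
  | inl h =>
    exact ⟨⟨⟨fun a => isEmptyElim a, fun a => isEmptyElim a⟩, fun {a b} => isEmptyElim a⟩⟩
  | inr h =>
    have : Countable W := hW
    obtain ⟨g, hg⟩ := exists_surjective_nat W
    exact Stmt8.embeds k H g hfree hg
end

section
/- Let k ≥ 1 and let 𝒞 be a finite set of finite k-connected graphs. Then for every G ∈ E_𝒞 and every A ⊆ V(G) with |A| < k, acl_G(A) = A. -/
open FirstOrder SimpleGraph

/-- `k`-connectedness: more than `k` vertices, and deleting any fewer than `k` vertices
leaves a connected graph. -/
def IsKConnected (k : ℕ) {α : Type} (C : SimpleGraph α) : Prop :=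
  k < Nat.card α ∧ ∀ s : Set α, s.Finite → s.ncard < k → (C.induce sᶜ).Connected

set_option linter.unnecessarySeqFocus false
set_option linter.unusedVariables false
set_option linter.unnecessarySimpa false
set_option linter.unreachableTactic false
set_option linter.unusedTactic false


lemma graph_term_var {β : Type*} (t : Language.graph.Term β) : ∃ x, t = Language.Term.var x := by
  cases t with
  | var x => exact ⟨x, rfl⟩
  | func f _ => exact Empty.elim f

lemma qf_transfer {V W : Type} (G : SimpleGraph V) (H : SimpleGraph W)
    (f : V → W) (s : Set V) (hinj : Set.InjOn f s)
    (hadj : ∀ u ∈ s, ∀ v ∈ s, G.Adj u v ↔ H.Adj (f u) (f v))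
    {α : Type} {n : ℕ} {ψ : Language.graph.BoundedFormula α n} (hqf : ψ.IsQF)
    (v : α → V) (xs : Fin n → V) (hv : ∀ a, v a ∈ s) (hxs : ∀ i, xs i ∈ s) :
    (@Language.BoundedFormula.Realize _ V G.structure α n ψ v xs ↔
      @Language.BoundedFormula.Realize _ W H.structure α n ψ (f ∘ v) (f ∘ xs)) := by
  letI : Language.graph.Structure V := G.structure
  letI : Language.graph.Structure W := H.structure
  induction hqf with
  | falsum => exact Iff.rfl
  | imp h₁ h₂ ih₁ ih₂ =>
      simp only [Language.BoundedFormula.realize_imp]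
      exact imp_congr ih₁ ih₂
  | of_isAtomic h =>
      have hmem : ∀ y : α ⊕ Fin n, Sum.elim v xs y ∈ s := by
        rintro (y | y); exacts [hv y, hxs y]
      cases h with
      | equal t₁ t₂ =>
          obtain ⟨x₁, rfl⟩ := graph_term_var t₁
          obtain ⟨x₂, rfl⟩ := graph_term_var t₂
          show Sum.elim v xs x₁ = Sum.elim v xs x₂ ↔
            Sum.elim (f ∘ v) (f ∘ xs) x₁ = Sum.elim (f ∘ v) (f ∘ xs) x₂
          have e1 : Sum.elim (f ∘ v) (f ∘ xs) x₁ = f (Sum.elim v xs x₁) := by cases x₁ <;> rfl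
          have e2 : Sum.elim (f ∘ v) (f ∘ xs) x₂ = f (Sum.elim v xs x₂) := by cases x₂ <;> rfl
          rw [e1, e2]
          exact ⟨fun h => h ▸ rfl, fun h => hinj (hmem x₁) (hmem x₂) h⟩
      | @rel l R ts =>
          cases R with
          | adj =>
            obtain ⟨x₀, h₀⟩ := graph_term_var (ts 0)
            obtain ⟨x₁, h₁⟩ := graph_term_var (ts 1)
            show G.Adj ((ts 0).realize (Sum.elim v xs)) ((ts 1).realize (Sum.elim v xs)) ↔
              H.Adj ((ts 0).realize (Sum.elim (f ∘ v) (f ∘ xs)))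
                ((ts 1).realize (Sum.elim (f ∘ v) (f ∘ xs)))
            rw [h₀, h₁]
            have e0 : Sum.elim (f ∘ v) (f ∘ xs) x₀ = f (Sum.elim v xs x₀) := by cases x₀ <;> rfl
            have e1 : Sum.elim (f ∘ v) (f ∘ xs) x₁ = f (Sum.elim v xs x₁) := by cases x₁ <;> rfl
            simp only [Language.Term.realize_var, e0, e1]
            exact hadj _ (hmem x₀) _ (hmem x₁)

section Amal
variable {V : Type}

def Amal (A : Finset V) (N : ℕ) : Type := {v : V // v ∈ A} ⊕ (Fin (N + 1) × {v : V // v ∉ A})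

instance {A : Finset V} {N : ℕ} [Countable V] : Countable (Amal A N) := by
  unfold Amal; infer_instance

variable {A : Finset V} {N : ℕ}

open Classical in
noncomputable def amalEmb (A : Finset V) (N : ℕ) (i : Fin (N + 1)) (v : V) : Amal A N :=
  if h : v ∈ A then Sum.inl ⟨v, h⟩ else Sum.inr (i, ⟨v, h⟩)

lemma amalEmb_eq_of {i j : Fin (N+1)} {u v : V} (h : amalEmb A N i u = amalEmb A N j v) :
    u = v := by
  unfold amalEmb at h
  by_cases hu : u ∈ A <;> by_cases hv : v ∈ A <;> simp [hu, hv] at h <;> simp_all [Amal]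

lemma amalEmb_injective (i : Fin (N+1)) : Function.Injective (amalEmb A N i) :=
  fun _ _ h => amalEmb_eq_of h

lemma amalEmb_inr {i j : Fin (N+1)} {u : V} {x : {v : V // v ∉ A}}
    (h : amalEmb A N i u = Sum.inr (j, x)) : i = j ∧ u = x.val := by
  unfold amalEmb at h
  split_ifs at h <;> simp_all [Amal]
  exact congrArg Subtype.val h.2

lemma amalEmb_mem {v : V} (h : v ∈ A) (i : Fin (N+1)) :
    amalEmb A N i v = Sum.inl ⟨v, h⟩ := by simp [amalEmb, h]; rfl

lemma amalEmb_not_mem {v : V} (h : v ∉ A) (i : Fin (N+1)) :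
    amalEmb A N i v = Sum.inr (i, ⟨v, h⟩) := by simp [amalEmb, h]; rfl

def amalG (G : SimpleGraph V) (A : Finset V) (N : ℕ) : SimpleGraph (Amal A N) where
  Adj w w' := ∃ i u u', G.Adj u u' ∧ amalEmb A N i u = w ∧ amalEmb A N i u' = w'
  symm := ⟨by rintro w w' ⟨i, u, u', h, hu, hu'⟩; exact ⟨i, u', u, h.symm, hu', hu⟩⟩
  loopless := ⟨by
    rintro w ⟨i, u, u', h, hu, hu'⟩
    exact h.ne (amalEmb_eq_of (hu.trans hu'.symm))⟩

variable {G : SimpleGraph V}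

lemma amalG_adj_emb {i : Fin (N+1)} {u v : V} :
    (amalG G A N).Adj (amalEmb A N i u) (amalEmb A N i v) ↔ G.Adj u v := by
  constructor
  · rintro ⟨j, x, y, h, hx, hy⟩
    rw [amalEmb_eq_of hx, amalEmb_eq_of hy] at h; exact h
  · exact fun h => ⟨i, u, v, h, rfl, rfl⟩

lemma amalG_adj_inr {i j : Fin (N+1)} {x y : {v : V // v ∉ A}}
    (h : (amalG G A N).Adj (Sum.inr (i, x)) (Sum.inr (j, y))) : i = j := by
  obtain ⟨l, u, u', _, hu, hu'⟩ := h
  exact (amalEmb_inr hu).1.symm.trans (amalEmb_inr hu').1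

noncomputable def amalEmbG (G : SimpleGraph V) (A : Finset V) (N : ℕ) (i : Fin (N+1)) :
    G ↪g amalG G A N :=
  ⟨⟨amalEmb A N i, amalEmb_injective i⟩, fun {a b} => amalG_adj_emb (i := i)⟩

end Amal

section Amal2
variable {V : Type} {A : Finset V} {N : ℕ} {G : SimpleGraph V}
-- extract the V-vertex of an amalgam vertex
def amalDown : Amal A N → V := Sum.elim Subtype.val (fun p => p.2.val)

lemma amalDown_emb {i : Fin (N+1)} {u : V} : amalDown (amalEmb A N i u) = u := by
  by_cases hu : u ∈ A
  · rw [amalEmb_mem hu]; rfl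
  · rw [amalEmb_not_mem hu]; rfl

lemma amalG_cfree {ι : Type} {nn : ι → ℕ} {𝒞 : ∀ i, SimpleGraph (Fin (nn i))} {k : ℕ}
    (hkconn : ∀ i, IsKConnected k (𝒞 i))
    (hf : CFree 𝒞 G) (hA : A.card < k) :
    CFree 𝒞 (amalG G A N) := by
  classical
  rintro i₀ ⟨g, hg⟩
  -- vertices mapping into the shared part
  set S : Set (Fin (nn i₀)) := {u | (g u).isLeft} with hS
  have hSfin : S.Finite := Set.toFinite S
  have hScard : S.ncard < k := by
    have hinj : Set.InjOn (fun u => (g u).getLeft?) S := by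
      intro u hu v hv huv
      apply g.injective
      simp only [hS, Set.mem_setOf_eq] at hu hv
      obtain ⟨a, ha⟩ := Sum.isLeft_iff.1 hu
      obtain ⟨b, hb⟩ := Sum.isLeft_iff.1 hv
      simp [ha, hb] at huv ⊢
      rw [huv]
    have h1 : S.ncard = ((fun u => (g u).getLeft?) '' S).ncard :=
      (Set.ncard_image_of_injOn hinj).symm
    have h2 : ((fun u => (g u).getLeft?) '' S) ⊆ (fun a => some a) '' (Set.univ : Set {v : V // v ∈ A}) := by
      rintro _ ⟨u, hu, rfl⟩
      obtain ⟨a, ha⟩ := Sum.isLeft_iff.1 hu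
      exact ⟨a, trivial, by simp [ha]⟩
    have h3 : ((fun a : {v : V // v ∈ A} => some a) '' Set.univ).ncard ≤ A.card := by
      rw [Set.ncard_image_of_injective _ (Option.some_injective _)]
      simpa [Set.ncard_univ] using le_of_eq (by simp [Nat.card_eq_fintypeCard])
    calc S.ncard = _ := h1
      _ ≤ _ := Set.ncard_le_ncard h2 (Set.toFinite _)
      _ ≤ A.card := h3
      _ < k := hA
  obtain ⟨hkcard, hconn⟩ := hkconn i₀
  have hC : ((𝒞 i₀).induce Sᶜ).Connected := hconn S hSfin hScard
  -- every vertex outside S maps to the right part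
  have hidx : ∀ u : (Sᶜ : Set (Fin (nn i₀))), ∃ b, g ↑u = Sum.inr b := by
    intro u
    cases h : g ↑u with
    | inl a => exact absurd (by simp [hS, h]) u.2
    | inr b => exact ⟨b, rfl⟩
  choose b hb using hidx
  -- the copy index is constant on Sᶜ
  have hkey : ∀ u v : (Sᶜ : Set (Fin (nn i₀))), (b u).1 = (b v).1 := by
    have step : ∀ u v : (Sᶜ : Set (Fin (nn i₀))), ((𝒞 i₀).induce Sᶜ).Walk u v → (b u).1 = (b v).1 := by
      intro u v w
      induction w with
      | nil => rfl
      | @cons x y z h p ih =>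
        refine Eq.trans ?_ ih
        have hadj : (amalG G A N).Adj (Sum.inr (b x)) (Sum.inr (b y)) := by
          rw [← hb x, ← hb y]; exact hg _ _ h
        exact amalG_adj_inr hadj
    exact fun u v => step u v (hC.preconnected u v).some
  -- build an embedding into G
  set h : Fin (nn i₀) → V := fun u => amalDown (g u) with hdef
  have hinj : Function.Injective h := by
    intro u v huv
    by_contra hne
    have hguv : g u ≠ g v := fun e => hne (g.injective e)
    cases hu : g u with
    | inl a =>
      cases hv : g v with
      | inl c =>
        apply hguv
        rw [hu, hv]
        have : a.val = c.val := by simpa [hdef, amalDown, hu, hv] using huv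
        simp [Subtype.ext this]; rfl
      | inr q =>
        have : a.val = q.2.val := by simpa [hdef, amalDown, hu, hv] using huv
        exact q.2.2 (this ▸ a.2)
    | inr q =>
      cases hv : g v with
      | inl c =>
        have : q.2.val = c.val := by simpa [hdef, amalDown, hu, hv] using huv
        exact q.2.2 (this.symm ▸ c.2)
      | inr r =>
        have hx : q.2 = r.2 := Subtype.ext (by simpa [hdef, amalDown, hu, hv] using huv)
        have hus : u ∈ (Sᶜ : Set (Fin (nn i₀))) := by simp [hS, hu]
        have hvs : v ∈ (Sᶜ : Set (Fin (nn i₀))) := by simp [hS, hv]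
        have hbu : (q.1, q.2) = b ⟨u, hus⟩ := by
          have := hb ⟨u, hus⟩
          simp only at this
          rw [hu] at this
          exact Sum.inr.inj this
        have hbv : (r.1, r.2) = b ⟨v, hvs⟩ := by
          have := hb ⟨v, hvs⟩
          simp only at this
          rw [hv] at this
          exact Sum.inr.inj this
        have hq1 : q.1 = r.1 := by
          have := hkey ⟨u, hus⟩ ⟨v, hvs⟩
          rw [← hbu, ← hbv] at this
          exact this
        apply hguv
        rw [hu, hv]
        congr 1
        exact Prod.ext hq1 hx
  have hedge : ∀ u v, (𝒞 i₀).Adj u v → G.Adj (h u) (h v) := by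
    intro u v huv
    obtain ⟨l, x, y, hxy, hx, hy⟩ := hg u v huv
    have h1 : h u = x := by rw [hdef]; simp only; rw [← hx, amalDown_emb]
    have h2 : h v = y := by rw [hdef]; simp only; rw [← hy, amalDown_emb]
    rw [h1, h2]
    exact hxy
  exact hf i₀ ⟨⟨h, hinj⟩, hedge⟩

end Amal2

/-- if every member of `𝒞` is `k`-connected, then for `G ∈ E_𝒞` and
`A ⊆ V(G)` with `|A| < k`, `acl_G(A) = A`. -/
theorem stmt_10 (k : ℕ) (hk : 1 ≤ k) {ι : Type} [Finite ι] {nn : ι → ℕ}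
    (𝒞 : ∀ i, SimpleGraph (Fin (nn i))) (hkconn : ∀ i, IsKConnected k (𝒞 i))
    {V : Type} (G : SimpleGraph V) (hG : InEC 𝒞 G)
    (A : Finset V) (hA : A.card < k) :
    aclG G ↑A = ↑A := by
  classical
  obtain ⟨hcount, hfree, hec⟩ := hG
  apply Set.Subset.antisymm
  · -- aclG ⊆ A
    intro a ha
    by_contra haA
    have haA' : a ∉ A := fun h => haA h
    obtain ⟨m, φ, p, ⟨k', ψ, hqf, rfl⟩, hp, hfin, hreal⟩ := ha
    set N := hfin.toFinset.card with hN
    have hHfree : CFree 𝒞 (amalG G A N) := amalG_cfree hkconn hfree hA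
    have hext : ExtComplete G (amalG G A N) (amalEmbG G A N 0) :=
      hec (Amal A N) (amalG G A N) inferInstance hHfree (amalEmbG G A N 0)
    -- witnesses for the existential formula in G
    have hrealG : ∃ ws : Fin k' → V,
        @Language.BoundedFormula.Realize _ V G.structure _ _ ψ (Fin.cons a p) ws := by
      have h0 : @Language.Formula.Realize _ V G.structure _ ψ.exs (Fin.cons a p) := hreal
      exact (@Language.BoundedFormula.realize_exs _ V G.structure _ _ _ _).1 h0
    obtain ⟨ws, hws⟩ := hrealG
    -- push the realization into each copy inside the amalgam
    have hcopy : ∀ i : Fin (N + 1),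
        @Language.BoundedFormula.Realize _ (Amal A N) (amalG G A N).structure _ _ ψ
          (amalEmb A N i ∘ Fin.cons a p) (amalEmb A N i ∘ ws) := fun i =>
      (qf_transfer G (amalG G A N) (amalEmb A N i) Set.univ
        ((amalEmb_injective i).injOn)
        (fun u _ v _ => (amalG_adj_emb (i := i)).symm) hqf _ _
        (fun _ => trivial) (fun _ => trivial)).1 hws
    -- the finite set of relevant points in the amalgam
    set B : Finset (Amal A N) :=
      (Finset.univ.image fun j => amalEmb A N 0 (p j)) ∪
        (Finset.univ.image fun i : Fin (N + 1) => amalEmb A N i a) ∪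
        Finset.univ.biUnion (fun i : Fin (N + 1) =>
          Finset.univ.image fun l => amalEmb A N i (ws l)) with hB
    have hpB : ∀ (i : Fin (N + 1)) (j : Fin m), amalEmb A N i (p j) ∈ B := by
      intro i j
      have : amalEmb A N i (p j) = amalEmb A N 0 (p j) := by
        rw [amalEmb_mem (hp j) i, amalEmb_mem (hp j) 0]
      rw [this, hB]
      simp only [Finset.mem_union, Finset.mem_image, Finset.mem_univ, true_and]
      exact Or.inl (Or.inl ⟨j, rfl⟩)
    have haB : ∀ i : Fin (N + 1), amalEmb A N i a ∈ B := by
      intro i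
      rw [hB]
      simp only [Finset.mem_union, Finset.mem_image, Finset.mem_univ, true_and]
      exact Or.inl (Or.inr ⟨i, rfl⟩)
    have hwB : ∀ (i : Fin (N + 1)) (l : Fin k'), amalEmb A N i (ws l) ∈ B := by
      intro i l
      rw [hB]
      simp only [Finset.mem_union, Finset.mem_biUnion, Finset.mem_image, Finset.mem_univ,
        true_and]
      exact Or.inr ⟨i, ⟨l, rfl⟩⟩
    obtain ⟨f, hfinj, hfix, hiso⟩ := hext (Finset.univ.image p) B
      (by
        intro x hx
        simp only [Finset.mem_image, Finset.mem_univ, true_and] at hx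
        obtain ⟨j, rfl⟩ := hx
        exact hpB 0 j)
    -- each copy of `a` is sent by `f` to a realization of the formula in `G`
    have hrel : ∀ i : Fin (N + 1), f (amalEmb A N i a) ∈ hfin.toFinset := by
      intro i
      rw [Set.Finite.mem_toFinset]
      have hvmem : ∀ j : Fin (m + 1), (amalEmb A N i ∘ Fin.cons a p) j ∈ (↑B : Set (Amal A N)) := by
        intro j
        refine Fin.cases ?_ (fun j' => ?_) j
        · simpa using haB i
        · simpa using hpB i j'
      have hxmem : ∀ l : Fin k', (amalEmb A N i ∘ ws) l ∈ (↑B : Set (Amal A N)) := by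
        intro l
        simpa using hwB i l
      have hback := (qf_transfer (amalG G A N) G f (↑B) hfinj
        (fun u hu v hv => hiso u hu v hv) hqf _ _ hvmem hxmem).1 (hcopy i)
      have hcomp : f ∘ (amalEmb A N i ∘ Fin.cons a p) =
          Fin.cons (f (amalEmb A N i a)) p := by
        funext j
        refine Fin.cases ?_ (fun j' => ?_) j
        · simp
        · simp only [Function.comp_apply, Fin.cons_succ]
          have h1 : amalEmb A N i (p j') = amalEmb A N 0 (p j') := by
            rw [amalEmb_mem (hp j') i, amalEmb_mem (hp j') 0]
          rw [h1]
          exact hfix (p j') (by simp)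
      rw [hcomp] at hback
      show @Language.Formula.Realize _ V G.structure _ ψ.exs (Fin.cons (f (amalEmb A N i a)) p)
      exact (@Language.BoundedFormula.realize_exs _ V G.structure _ _ _ _).2 ⟨_, hback⟩
    -- but those values are pairwise distinct, contradiction with |S| = N
    have hFinj : ∀ i j : Fin (N + 1), f (amalEmb A N i a) = f (amalEmb A N j a) → i = j := by
      intro i j hij
      have := hfinj (haB i) (haB j) hij
      rw [amalEmb_not_mem haA' i, amalEmb_not_mem haA' j] at this
      exact (Prod.ext_iff.1 (Sum.inr.inj this)).1
    have hcard : (Finset.univ : Finset (Fin (N + 1))).card ≤ hfin.toFinset.card :=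
      Finset.card_le_card_of_injOn (fun i => f (amalEmb A N i a)) (fun i _ => hrel i)
        (fun i _ j _ h => hFinj i j h)
    simp only [Finset.card_univ, Fintype.card_fin] at hcard
    omega
  · -- A ⊆ aclG
    intro a ha
    refine ⟨1, Language.Term.equal (Language.Term.var 0) (Language.Term.var 1), fun _ => a,
      ⟨0, Language.Term.equal (Language.Term.var 0) (Language.Term.var 1),
        (Language.BoundedFormula.IsAtomic.equal _ _).isQF, rfl⟩, fun _ => ha, ?_, ?_⟩
    · have hsub : {a' : V | GRealize G
          ((Language.Term.var (0 : Fin 2)).equal (Language.Term.var (1 : Fin 2)))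
          (Fin.cons a' fun _ => a)} ⊆ {a} := by
        intro a' ha'
        have : (Fin.cons a' (fun _ => a) : Fin 2 → V) 0 =
            (Fin.cons a' (fun _ => a) : Fin 2 → V) 1 := by
          have h0 : @Language.Formula.Realize _ V G.structure _
              ((Language.Term.var (0 : Fin 2)).equal (Language.Term.var (1 : Fin 2)))
              (Fin.cons a' fun _ => a) := ha'
          simpa using h0
        simpa using this
      exact Set.Finite.subset (Set.finite_singleton a) hsub
    · show @Language.Formula.Realize _ V G.structure _
        (Language.Term.equal (Language.Term.var 0) (Language.Term.var 1))
        (Fin.cons a fun _ => a)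
      simp
end

section
/- For n ≥ 1, the graph M_n satisfies: (i) the chromatic number of M_n is n+1; (ii) for every k with 0 ≤ k ≤ n, the join K_k ✶ M_{n−k} is a homomorphic image of M_n; (iii) for every surjective homomorphism h from M_n onto its homomorphic image H, H contains as a subgraph some K_k ✶ M_{n−k} with 0 ≤ k ≤ n and k ≠ n−1; and (iv) for distinct k, l with 0 ≤ k, l ≤ n and k ≠ n−1 and l ≠ n−1, the graph K_k ✶ M_{n−k} is not isomorphic to any subgraph of K_l ✶ M_{n−l}. In particular the set ℋ(M_n) of minimal homomorphic images of M_n equals {K_k ✶ M_{n−k} : 0 ≤ k ≤ n, k ≠ n−1} and has exactly n elements. -/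
open FirstOrder SimpleGraph

/-- Adjacency relation of the homomorphic image of `C` under a map `h` (the image graph has
vertex set `h(V(C))` and edges `{(h u, h v) : (u,v) ∈ E(C)}`). -/
def HomImageAdj {α V : Type} (C : SimpleGraph α) (h : α → V) (x y : V) : Prop :=
  ∃ u v, C.Adj u v ∧ h u = x ∧ h v = y

/-- The join of two graphs. -/
def GraphJoin {α β : Type} (A : SimpleGraph α) (B : SimpleGraph β) : SimpleGraph (α ⊕ β) :=
  SimpleGraph.fromRel (fun x y =>
    (∃ a b, x = Sum.inl a ∧ y = Sum.inl b ∧ A.Adj a b) ∨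
    (∃ a b, x = Sum.inr a ∧ y = Sum.inr b ∧ B.Adj a b) ∨
    (∃ a b, x = Sum.inl a ∧ y = Sum.inr b))

/-- The generalized Mycielski graph `M n`, with vertices `0, a_1, …, a_n, b_1, …, b_n`
encoded as `0`, `1, …, n`, `n+1, …, 2n` in `Fin (2n+1)`: `0` is adjacent exactly to the
`a_i`, the `b_j` form a complete graph, the `a_i` are independent, and `a_i ~ b_j` iff
`i ≠ j`.  `M 0` is the one-vertex graph. -/
def Myc (n : ℕ) : SimpleGraph (Fin (2 * n + 1)) :=
  SimpleGraph.fromRel (fun x y =>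
    (x.val = 0 ∧ 1 ≤ y.val ∧ y.val ≤ n) ∨
    (n + 1 ≤ x.val ∧ n + 1 ≤ y.val) ∨
    (1 ≤ x.val ∧ x.val ≤ n ∧ n + 1 ≤ y.val ∧ y.val ≠ x.val + n))

lemma myc_adj_iff (m : ℕ) (x y : Fin (2*m+1)) :
    (Myc m).Adj x y ↔ (x.val ≠ y.val ∧
      ((x.val = 0 ∧ 1 ≤ y.val ∧ y.val ≤ m) ∨ (y.val = 0 ∧ 1 ≤ x.val ∧ x.val ≤ m) ∨
       (m+1 ≤ x.val ∧ m+1 ≤ y.val) ∨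
       (1 ≤ x.val ∧ x.val ≤ m ∧ m+1 ≤ y.val ∧ y.val ≠ x.val + m) ∨
       (1 ≤ y.val ∧ y.val ≤ m ∧ m+1 ≤ x.val ∧ x.val ≠ y.val + m))) := by
  simp only [Myc, SimpleGraph.fromRel_adj, ne_eq, ← Fin.val_eq_val]
  tauto

lemma myc_colorable (n : ℕ) : (Myc n).Colorable (n+1) := by
  refine ⟨⟨fun x => if _ : x.val = 0 then ⟨n, by omega⟩ else
      if _ : x.val ≤ n then ⟨x.val - 1, by omega⟩ else ⟨x.val - n - 1, by omega⟩, ?_⟩⟩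
  intro x y hadj
  rw [myc_adj_iff] at hadj
  simp only [top_adj, ne_eq]
  split_ifs <;> simp only [Fin.mk.injEq] <;> omega

lemma myc_not_colorable (n : ℕ) (hn : 1 ≤ n) : ¬ (Myc n).Colorable n := by
  rintro ⟨c⟩
  have ginj : Function.Injective (fun i : Fin n => c ⟨n+1+i.val, by omega⟩) := by
    intro i j hij
    by_contra hne
    have hne' : i.val ≠ j.val := fun h => hne (Fin.ext h)
    refine c.valid ?_ hij
    rw [myc_adj_iff]
    simp only [Fin.val_mk]
    omega
  have gsurj := Finite.surjective_of_injective ginj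
  obtain ⟨j, hj⟩ := gsurj (c ⟨0, by omega⟩)
  obtain ⟨i, hi⟩ := gsurj (c ⟨j.val+1, by omega⟩)
  simp only at hi hj
  by_cases hij : i = j
  · subst hij
    have hadj : (Myc n).Adj ⟨0, by omega⟩ ⟨i.val+1, by omega⟩ := by
      rw [myc_adj_iff]; simp only [Fin.val_mk, true_and, and_true]; omega
    exact c.valid hadj (hj.symm.trans hi)
  · have hne : i.val ≠ j.val := fun h => hij (Fin.ext h)
    have hadj : (Myc n).Adj ⟨j.val+1, by omega⟩ ⟨n+1+i.val, by omega⟩ := by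
      rw [myc_adj_iff]; simp only [Fin.val_mk, true_and, and_true]; omega
    exact c.valid hadj hi.symm

lemma myc_chrom (n : ℕ) (hn : 1 ≤ n) : (Myc n).chromaticNumber = ((n : ℕ∞) + 1) := by
  apply le_antisymm
  · have h := (myc_colorable n).chromaticNumber_le
    rwa [Nat.cast_add, Nat.cast_one] at h
  · rw [ENat.add_one_le_iff (by simp)]
    by_contra hle
    push_neg at hle
    exact myc_not_colorable n hn (chromaticNumber_le_iff_colorable.mp hle)

lemma myc_adj_of (m : ℕ) (x y : Fin (2*m+1))
    (h : x.val ≠ y.val ∧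
      ((x.val = 0 ∧ 1 ≤ y.val ∧ y.val ≤ m) ∨ (y.val = 0 ∧ 1 ≤ x.val ∧ x.val ≤ m) ∨
       (m+1 ≤ x.val ∧ m+1 ≤ y.val) ∨
       (1 ≤ x.val ∧ x.val ≤ m ∧ m+1 ≤ y.val ∧ y.val ≠ x.val + m) ∨
       (1 ≤ y.val ∧ y.val ≤ m ∧ m+1 ≤ x.val ∧ x.val ≠ y.val + m))) :
    (Myc m).Adj x y := (myc_adj_iff m x y).mpr h

lemma join_ll {β : Type} (B : SimpleGraph β) (k : ℕ) (a b : Fin k) :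
    (GraphJoin (completeGraph (Fin k)) B).Adj (Sum.inl a) (Sum.inl b) ↔ a ≠ b := by
  simp only [GraphJoin, SimpleGraph.fromRel_adj, completeGraph, ne_eq, top_adj]
  aesop

lemma join_lr {β : Type} (B : SimpleGraph β) (k : ℕ) (a : Fin k) (b : β) :
    (GraphJoin (completeGraph (Fin k)) B).Adj (Sum.inl a) (Sum.inr b) := by
  simp only [GraphJoin, SimpleGraph.fromRel_adj]
  exact ⟨by simp, Or.inl (Or.inr (Or.inr ⟨a, b, rfl, rfl⟩))⟩

lemma join_rl {β : Type} (B : SimpleGraph β) (k : ℕ) (a : Fin k) (b : β) :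
    (GraphJoin (completeGraph (Fin k)) B).Adj (Sum.inr b) (Sum.inl a) :=
  (join_lr B k a b).symm

lemma join_rr {β : Type} (B : SimpleGraph β) (k : ℕ) (a b : β) :
    (GraphJoin (completeGraph (Fin k)) B).Adj (Sum.inr a) (Sum.inr b) ↔ B.Adj a b := by
  simp only [GraphJoin, SimpleGraph.fromRel_adj]
  constructor
  · rintro ⟨hne, (h|h|h) | (h|h|h)⟩
    · aesop
    · aesop
    · aesop
    · aesop
    · obtain ⟨x,y,hx,hy,hadj⟩ := h; cases hx; cases hy; exact hadj.symm
    · aesop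
  · intro h; exact ⟨by simp [h.ne], Or.inl (Or.inr (Or.inl ⟨a, b, rfl, rfl, h⟩))⟩

/-- The collapsing map for part (ii). -/
def hmap (n k : ℕ) (hk : k ≤ n) (x : Fin (2*n+1)) : Fin k ⊕ Fin (2*(n-k)+1) :=
  if h1 : x.val = 0 then Sum.inr ⟨0, by omega⟩
  else if h2 : x.val ≤ k then Sum.inl ⟨x.val - 1, by omega⟩
  else if h3 : x.val ≤ n then Sum.inr ⟨x.val - k, by omega⟩
  else if h4 : x.val ≤ n + k then Sum.inl ⟨x.val - n - 1, by omega⟩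
  else Sum.inr ⟨x.val - 2*k, by omega⟩

lemma hmap_spec (n k : ℕ) (hk : k ≤ n) (x : Fin (2*n+1)) :
    (x.val = 0 ∧ ∃ w : Fin (2*(n-k)+1), w.val = 0 ∧ hmap n k hk x = Sum.inr w) ∨
    (1 ≤ x.val ∧ x.val ≤ k ∧ ∃ j : Fin k, j.val = x.val - 1 ∧ hmap n k hk x = Sum.inl j) ∨
    (k+1 ≤ x.val ∧ x.val ≤ n ∧
      ∃ w : Fin (2*(n-k)+1), w.val = x.val - k ∧ hmap n k hk x = Sum.inr w) ∨
    (n+1 ≤ x.val ∧ x.val ≤ n+k ∧ ∃ j : Fin k, j.val = x.val - n - 1 ∧ hmap n k hk x = Sum.inl j) ∨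
    (n+k+1 ≤ x.val ∧ x.val ≤ 2*n ∧
      ∃ w : Fin (2*(n-k)+1), w.val = x.val - 2*k ∧ hmap n k hk x = Sum.inr w) := by
  have hlt := x.isLt
  unfold hmap
  split_ifs with h1 h2 h3 h4
  · exact Or.inl ⟨h1, _, rfl, rfl⟩
  · exact Or.inr (Or.inl ⟨by omega, h2, _, rfl, rfl⟩)
  · exact Or.inr (Or.inr (Or.inl ⟨by omega, h3, _, rfl, rfl⟩))
  · exact Or.inr (Or.inr (Or.inr (Or.inl ⟨by omega, h4, _, rfl, rfl⟩)))
  · exact Or.inr (Or.inr (Or.inr (Or.inr ⟨by omega, by omega, _, rfl, rfl⟩)))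

lemma hmap_noncollapse (n k : ℕ) (hk : k ≤ n) :
    ∀ u v, (Myc n).Adj u v → hmap n k hk u ≠ hmap n k hk v := by
  intro u v hadj
  rw [myc_adj_iff] at hadj
  rcases hmap_spec n k hk u with ⟨hu, wu, hwu, hu'⟩ | ⟨hu1, hu2, wu, hwu, hu'⟩ |
      ⟨hu1, hu2, wu, hwu, hu'⟩ | ⟨hu1, hu2, wu, hwu, hu'⟩ | ⟨hu1, hu2, wu, hwu, hu'⟩ <;>
    rcases hmap_spec n k hk v with ⟨hv, wv, hwv, hv'⟩ | ⟨hv1, hv2, wv, hwv, hv'⟩ |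
      ⟨hv1, hv2, wv, hwv, hv'⟩ | ⟨hv1, hv2, wv, hwv, hv'⟩ | ⟨hv1, hv2, wv, hwv, hv'⟩ <;>
    rw [hu', hv'] <;>
    simp only [ne_eq, Sum.inl.injEq, Sum.inr.injEq, reduceCtorEq, not_false_iff,
      ← Fin.val_eq_val] <;>
    omega

lemma hmap_eq_inl (n k : ℕ) (hk : k ≤ n) (x : Fin (2*n+1)) (j : Fin k)
    (h : x.val = j.val + 1 ∨ x.val = n + 1 + j.val) : hmap n k hk x = Sum.inl j := by
  have hj := j.isLt
  rcases hmap_spec n k hk x with ⟨hu, wu, hwu, hu'⟩ | ⟨hu1, hu2, wu, hwu, hu'⟩ |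
      ⟨hu1, hu2, wu, hwu, hu'⟩ | ⟨hu1, hu2, wu, hwu, hu'⟩ | ⟨hu1, hu2, wu, hwu, hu'⟩ <;>
    first
      | omega
      | (rw [hu']; exact congrArg Sum.inl (Fin.ext (by omega)))

lemma hmap_eq_inr (n k : ℕ) (hk : k ≤ n) (x : Fin (2*n+1)) (w : Fin (2*(n-k)+1))
    (h : (x.val = 0 ∧ w.val = 0) ∨ (k+1 ≤ x.val ∧ x.val ≤ n ∧ w.val = x.val - k) ∨
      (n+k+1 ≤ x.val ∧ w.val = x.val - 2*k)) : hmap n k hk x = Sum.inr w := by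
  have hw := w.isLt
  have hx := x.isLt
  rcases hmap_spec n k hk x with ⟨hu, wu, hwu, hu'⟩ | ⟨hu1, hu2, wu, hwu, hu'⟩ |
      ⟨hu1, hu2, wu, hwu, hu'⟩ | ⟨hu1, hu2, wu, hwu, hu'⟩ | ⟨hu1, hu2, wu, hwu, hu'⟩ <;>
    first
      | omega
      | (rw [hu']; exact congrArg Sum.inr (Fin.ext (by omega)))

lemma hmap_surj (n k : ℕ) (hk : k ≤ n) : Function.Surjective (hmap n k hk) := by
  rintro (c | w)
  · exact ⟨⟨n+1+c.val, by omega⟩, hmap_eq_inl n k hk _ c (Or.inr rfl)⟩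
  · have hw := w.isLt
    by_cases h0 : w.val = 0
    · exact ⟨⟨0, by omega⟩, hmap_eq_inr n k hk _ w (Or.inl ⟨rfl, h0⟩)⟩
    · by_cases ha : w.val ≤ n - k
      · exact ⟨⟨k + w.val, by omega⟩, hmap_eq_inr n k hk _ w
          (Or.inr (Or.inl ⟨by simp only [Fin.val_mk, true_and, and_true]; omega, by simp only [Fin.val_mk, true_and, and_true]; omega,
            by simp only [Fin.val_mk, true_and, and_true]; omega⟩))⟩
      · exact ⟨⟨2*k + w.val, by omega⟩, hmap_eq_inr n k hk _ w
          (Or.inr (Or.inr ⟨by simp only [Fin.val_mk, true_and, and_true]; omega, by simp only [Fin.val_mk, true_and, and_true]; omega⟩))⟩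

lemma homimage_symm {α V : Type} (C : SimpleGraph α) (h : α → V) (x y : V)
    (hxy : HomImageAdj C h x y) : HomImageAdj C h y x := by
  obtain ⟨u, v, huv, hu, hv⟩ := hxy
  exact ⟨v, u, huv.symm, hv, hu⟩

lemma part2_lr (n k : ℕ) (hk : k ≤ n) (c : Fin k) (w : Fin (2*(n-k)+1)) :
    HomImageAdj (Myc n) (hmap n k hk) (Sum.inl c) (Sum.inr w) := by
  have hc := c.isLt
  have hw := w.isLt
  by_cases h0 : w.val = 0
  · refine ⟨⟨c.val+1, by omega⟩, ⟨0, by omega⟩, myc_adj_of n _ _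
      (by simp only [Fin.val_mk, true_and, and_true]; omega), hmap_eq_inl n k hk _ c (Or.inl rfl), 
      hmap_eq_inr n k hk _ w (Or.inl ⟨rfl, h0⟩)⟩
  · by_cases ha : w.val ≤ n - k
    · refine ⟨⟨n+1+c.val, by omega⟩, ⟨k+w.val, by omega⟩, myc_adj_of n _ _
        (by simp only [Fin.val_mk, true_and, and_true]; omega), hmap_eq_inl n k hk _ c (Or.inr rfl),
        hmap_eq_inr n k hk _ w (Or.inr (Or.inl (by simp only [Fin.val_mk, true_and, and_true]; omega)))⟩
    · refine ⟨⟨n+1+c.val, by omega⟩, ⟨2*k+w.val, by omega⟩, myc_adj_of n _ _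
        (by simp only [Fin.val_mk, true_and, and_true]; omega), hmap_eq_inl n k hk _ c (Or.inr rfl),
        hmap_eq_inr n k hk _ w (Or.inr (Or.inr (by simp only [Fin.val_mk, true_and, and_true]; omega)))⟩

lemma part2_ll (n k : ℕ) (hk : k ≤ n) (c c' : Fin k) (hcc : c ≠ c') :
    HomImageAdj (Myc n) (hmap n k hk) (Sum.inl c) (Sum.inl c') := by
  have hc := c.isLt
  have hc' := c'.isLt
  have hne : c.val ≠ c'.val := fun h => hcc (Fin.ext h)
  exact ⟨⟨n+1+c.val, by omega⟩, ⟨n+1+c'.val, by omega⟩, myc_adj_of n _ _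
    (by simp only [Fin.val_mk, true_and, and_true]; omega), hmap_eq_inl n k hk _ c (Or.inr rfl),
    hmap_eq_inl n k hk _ c' (Or.inr rfl)⟩

lemma part2_rr (n k : ℕ) (hk : k ≤ n) (w w' : Fin (2*(n-k)+1))
    (hadj : (Myc (n-k)).Adj w w') :
    HomImageAdj (Myc n) (hmap n k hk) (Sum.inr w) (Sum.inr w') := by
  have hw := w.isLt
  have hw' := w'.isLt
  rw [myc_adj_iff] at hadj
  obtain ⟨hne, hcase⟩ := hadj
  rcases hcase with h | h | h | h | h
  · -- w = 0, w' a-type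
    exact ⟨⟨0, by omega⟩, ⟨k+w'.val, by omega⟩, myc_adj_of n _ _
      (by simp only [Fin.val_mk, true_and, and_true]; omega), hmap_eq_inr n k hk _ w (Or.inl ⟨rfl, h.1⟩),
      hmap_eq_inr n k hk _ w' (Or.inr (Or.inl (by simp only [Fin.val_mk, true_and, and_true]; omega)))⟩
  · exact homimage_symm _ _ _ _ ⟨⟨0, by omega⟩, ⟨k+w.val, by omega⟩, myc_adj_of n _ _
      (by simp only [Fin.val_mk, true_and, and_true]; omega), hmap_eq_inr n k hk _ w' (Or.inl ⟨rfl, h.1⟩),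
      hmap_eq_inr n k hk _ w (Or.inr (Or.inl (by simp only [Fin.val_mk, true_and, and_true]; omega)))⟩
  · -- both b-type
    exact ⟨⟨2*k+w.val, by omega⟩, ⟨2*k+w'.val, by omega⟩, myc_adj_of n _ _
      (by simp only [Fin.val_mk, true_and, and_true]; omega),
      hmap_eq_inr n k hk _ w (Or.inr (Or.inr (by simp only [Fin.val_mk, true_and, and_true]; omega))),
      hmap_eq_inr n k hk _ w' (Or.inr (Or.inr (by simp only [Fin.val_mk, true_and, and_true]; omega)))⟩
  · -- w a-type, w' b-type
    exact ⟨⟨k+w.val, by omega⟩, ⟨2*k+w'.val, by omega⟩, myc_adj_of n _ _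
      (by simp only [Fin.val_mk, true_and, and_true]; omega),
      hmap_eq_inr n k hk _ w (Or.inr (Or.inl (by simp only [Fin.val_mk, true_and, and_true]; omega))),
      hmap_eq_inr n k hk _ w' (Or.inr (Or.inr (by simp only [Fin.val_mk, true_and, and_true]; omega)))⟩
  · exact homimage_symm _ _ _ _ ⟨⟨k+w'.val, by omega⟩, ⟨2*k+w.val, by omega⟩, myc_adj_of n _ _
      (by simp only [Fin.val_mk, true_and, and_true]; omega),
      hmap_eq_inr n k hk _ w' (Or.inr (Or.inl (by simp only [Fin.val_mk, true_and, and_true]; omega))),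
      hmap_eq_inr n k hk _ w (Or.inr (Or.inr (by simp only [Fin.val_mk, true_and, and_true]; omega)))⟩

lemma part2_iff (n k : ℕ) (hk : k ≤ n) (x y : Fin k ⊕ Fin (2*(n-k)+1)) :
    (GraphJoin (completeGraph (Fin k)) (Myc (n-k))).Adj x y ↔
      HomImageAdj (Myc n) (hmap n k hk) x y := by
  constructor
  · intro hadj
    rcases x with c | w <;> rcases y with c' | w'
    · exact part2_ll n k hk c c' ((join_ll _ k c c').mp hadj)
    · exact part2_lr n k hk c w'
    · exact homimage_symm _ _ _ _ (part2_lr n k hk c' w)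
    · exact part2_rr n k hk w w' ((join_rr _ k w w').mp hadj)
  · rintro ⟨u, v, huv, hu, hv⟩
    have hnc := hmap_noncollapse n k hk u v huv
    rw [myc_adj_iff] at huv
    rcases hmap_spec n k hk u with ⟨hu1, wu, hwu, hu'⟩ | ⟨hu1, hu2, wu, hwu, hu'⟩ |
        ⟨hu1, hu2, wu, hwu, hu'⟩ | ⟨hu1, hu2, wu, hwu, hu'⟩ | ⟨hu1, hu2, wu, hwu, hu'⟩ <;>
      rcases hmap_spec n k hk v with ⟨hv1, wv, hwv, hv'⟩ | ⟨hv1, hv2, wv, hwv, hv'⟩ |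
        ⟨hv1, hv2, wv, hwv, hv'⟩ | ⟨hv1, hv2, wv, hwv, hv'⟩ | ⟨hv1, hv2, wv, hwv, hv'⟩ <;>
      rw [hu'] at hu <;> rw [hv'] at hv <;> subst hu <;> subst hv <;>
      first
        | (exfalso; omega)
        | exact join_lr _ _ _ _
        | exact join_rl _ _ _ _
        | (rw [join_ll]; exact fun hE => absurd (congrArg Fin.val hE) (by omega))
        | (rw [join_rr, myc_adj_iff]; omega)

lemma subIso_of_clique {T : Type} (G : SimpleGraph T) (n : ℕ) (g : Fin (n+1) → T)
    (hadj : ∀ i j, i ≠ j → G.Adj (g i) (g j)) :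
    SubIso (GraphJoin (completeGraph (Fin n)) (Myc 0)) G := by
  have hinj : Function.Injective g := by
    intro i j hij
    by_contra hne
    exact (hadj i j hne).ne hij
  have hcl : ∀ i : Fin n, (Fin.castSucc i) ≠ Fin.last n := fun i => (Fin.castSucc_lt_last i).ne
  refine ⟨⟨fun x => g (Sum.elim Fin.castSucc (fun _ => Fin.last n) x), ?_⟩, ?_⟩
  · rintro (i | i) (j | j) hEq <;> simp only [Sum.elim_inl, Sum.elim_inr] at hEq
    · exact congrArg Sum.inl (Fin.castSucc_injective n (hinj hEq))
    · exact absurd (hinj hEq) (hcl i)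
    · exact absurd (hinj hEq).symm (hcl j)
    · exact congrArg Sum.inr (Fin.ext (by omega))
  · rintro (i | i) (j | j) hadj'
    · have hne := (join_ll _ n i j).mp hadj'
      exact hadj _ _ (fun hE => hne (Fin.castSucc_injective n hE))
    · exact hadj _ _ (hcl i)
    · exact hadj _ _ (fun hE => (hcl j) hE.symm)
    · exfalso
      have := (join_rr (Myc 0) n i j).mp hadj'
      rw [myc_adj_iff] at this
      omega

section Part3
variable {n : ℕ} {T : Type} (h : Fin (2*n+1) → T)

/-- vertex names -/
def vZ (n : ℕ) : Fin (2*n+1) := ⟨0, by omega⟩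
def vA (i : Fin n) : Fin (2*n+1) := ⟨i.val + 1, by omega⟩
def vB (i : Fin n) : Fin (2*n+1) := ⟨n + 1 + i.val, by omega⟩

lemma adjZA (i : Fin n) : (Myc n).Adj (vZ n) (vA i) := by
  have := i.isLt
  exact myc_adj_of n _ _ (by simp only [vZ, vA, Fin.val_mk, true_and, and_true]; omega)

lemma adjAB {i j : Fin n} (hij : i ≠ j) : (Myc n).Adj (vA i) (vB j) := by
  have := i.isLt; have := j.isLt
  have hne : i.val ≠ j.val := fun hE => hij (Fin.ext hE)
  exact myc_adj_of n _ _ (by simp only [vA, vB, Fin.val_mk, true_and, and_true]; omega)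

lemma adjBB {i j : Fin n} (hij : i ≠ j) : (Myc n).Adj (vB i) (vB j) := by
  have := i.isLt; have := j.isLt
  have hne : i.val ≠ j.val := fun hE => hij (Fin.ext hE)
  exact myc_adj_of n _ _ (by simp only [vB, Fin.val_mk, true_and, and_true]; omega)

lemma vA_inj {i j : Fin n} (hE : vA i = vA j) : i = j := by
  have := congrArg Fin.val hE
  simp only [vA, Fin.val_mk] at this
  exact Fin.ext (by omega)

lemma vB_inj {i j : Fin n} (hE : vB i = vB j) : i = j := by
  have := congrArg Fin.val hE
  simp only [vB, Fin.val_mk] at this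
  exact Fin.ext (by omega)

lemma part3 (hn : 1 ≤ n) (hnc : ∀ u v, (Myc n).Adj u v → h u ≠ h v) :
    ∃ k, k ≤ n ∧ k ≠ n - 1 ∧ SubIso (GraphJoin (completeGraph (Fin k)) (Myc (n-k)))
      (SimpleGraph.fromRel (HomImageAdj (Myc n) h)) := by
  classical
  set G := SimpleGraph.fromRel (HomImageAdj (Myc n) h) with hG
  have key : ∀ u v, (Myc n).Adj u v → G.Adj (h u) (h v) := by
    intro u v huv
    rw [hG, SimpleGraph.fromRel_adj]
    exact ⟨hnc u v huv, Or.inl ⟨u, v, huv, rfl, rfl⟩⟩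
  by_cases hA : ∃ i j : Fin n, i ≠ j ∧ h (vA i) = h (vA j)
  · -- two a's identified: K_{n+1}
    obtain ⟨i, j, hij, hEq⟩ := hA
    refine ⟨n, le_refl n, by omega, ?_⟩
    rw [Nat.sub_self]
    refine subIso_of_clique G n
      (fun t => if ht : t.val < n then h (vB ⟨t.val, ht⟩) else h (vA i)) ?_
    intro s t hst
    have hstv : s.val ≠ t.val := fun hE => hst (Fin.ext hE)
    split_ifs with hs ht ht2
    · exact key _ _ (adjBB (by simp only [ne_eq, ← Fin.val_eq_val, Fin.val_mk]; omega))
    · -- B s' vs A i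
      by_cases hsi : (⟨s.val, hs⟩ : Fin n) = i
      · rw [hEq]
        refine (key _ _ (adjAB (j := ⟨s.val, hs⟩) ?_)).symm
        rw [hsi]; exact hij.symm
      · exact (key _ _ (adjAB (Ne.symm hsi))).symm
    · by_cases hti : (⟨t.val, ht2⟩ : Fin n) = i
      · rw [hEq]
        refine key _ _ (adjAB (j := ⟨t.val, ht2⟩) ?_)
        rw [hti]; exact hij.symm
      · exact key _ _ (adjAB (Ne.symm hti))
    · exact absurd (by omega : s.val = t.val) hstv
  by_cases hB : ∃ i : Fin n, h (vZ n) = h (vB i)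
  · -- h(0) identified with some b: K_{n+1}
    obtain ⟨m, hEq⟩ := hB
    refine ⟨n, le_refl n, by omega, ?_⟩
    rw [Nat.sub_self]
    refine subIso_of_clique G n
      (fun t => if ht : t.val < n then h (vB ⟨t.val, ht⟩) else h (vA m)) ?_
    intro s t hst
    have hstv : s.val ≠ t.val := fun hE => hst (Fin.ext hE)
    split_ifs with hs ht ht2
    · exact key _ _ (adjBB (by simp only [ne_eq, ← Fin.val_eq_val, Fin.val_mk]; omega))
    · by_cases hsm : (⟨s.val, hs⟩ : Fin n) = m
      · rw [hsm, ← hEq]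
        exact key _ _ (adjZA m)
      · exact (key _ _ (adjAB (Ne.symm hsm))).symm
    · by_cases htm : (⟨t.val, ht2⟩ : Fin n) = m
      · rw [htm, ← hEq]
        exact (key _ _ (adjZA m)).symm
      · exact key _ _ (adjAB (Ne.symm htm))
    · exact absurd (by omega : s.val = t.val) hstv
  · -- no a-a identifications, h(0) not identified with any b
    set S := Finset.univ.filter (fun i : Fin n => h (vA i) = h (vB i)) with hSdef
    have hSeq : ∀ x ∈ S, h (vA x) = h (vB x) := by
      intro x hx; exact (Finset.mem_filter.mp hx).2
    have hSne : ∀ x : Fin n, x ∉ S → h (vA x) ≠ h (vB x) := by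
      intro x hx hE; exact hx (Finset.mem_filter.mpr ⟨Finset.mem_univ x, hE⟩)
    have hkn : S.card ≤ n := by
      have := Finset.card_filter_le (Finset.univ : Finset (Fin n))
        (fun i => h (vA i) = h (vB i))
      simpa using this
    -- basic distinctness facts
    have d1 : ∀ i j : Fin n, i ≠ j → h (vB i) ≠ h (vB j) := fun i j hij => (key _ _ (adjBB hij)).ne
    have d2 : ∀ i, h (vZ n) ≠ h (vA i) := fun i => (key _ _ (adjZA i)).ne
    have d3 : ∀ i j : Fin n, i ≠ j → h (vA i) ≠ h (vB j) := fun i j hij => (key _ _ (adjAB hij)).ne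
    have d5 : ∀ i, h (vZ n) ≠ h (vB i) := fun i hE => hB ⟨i, hE⟩
    have d6 : ∀ i j : Fin n, i ≠ j → h (vA i) ≠ h (vA j) := fun i j hij hE => hA ⟨i, j, hij, hE⟩
    by_cases hS1 : S.card = n - 1
    · -- |S| = n-1 : K_{n+1}
      have hn2 : 2 ≤ n ∨ n = 1 := by omega
      have hScompl : Sᶜ.card = 1 := by
        rw [Finset.card_compl, Fintype.card_fin, hS1]; omega
      obtain ⟨m, hm⟩ := Finset.card_pos.mp (by omega : 0 < Sᶜ.card)
      have hmS : m ∉ S := Finset.mem_compl.mp hm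
      set σ := S.orderIsoOfFin hS1 with hσ
      refine ⟨n, le_refl n, by omega, ?_⟩
      rw [Nat.sub_self]
      refine subIso_of_clique G n
        (fun t => if ht : t.val < n - 1 then h (vB (σ ⟨t.val, ht⟩)) else
          if t.val = n - 1 then h (vZ n) else h (vA m)) ?_
      have main : ∀ s t : Fin (n+1), s.val < t.val →
          G.Adj ((fun t => if ht : t.val < n - 1 then h (vB (σ ⟨t.val, ht⟩)) else
            if t.val = n - 1 then h (vZ n) else h (vA m)) s)
          ((fun t => if ht : t.val < n - 1 then h (vB (σ ⟨t.val, ht⟩)) else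
            if t.val = n - 1 then h (vZ n) else h (vA m)) t) := by
        intro s t hlt
        dsimp only
        split_ifs with hs ht ht2 ht ht2 hs2
        · -- B B
          refine key _ _ (adjBB ?_)
          intro hE
          have h2 := σ.injective (Subtype.coe_injective hE)
          simp only [Fin.mk.injEq] at h2
          omega
        · -- B Z
          have hmem := (σ ⟨s.val, hs⟩).2
          rw [← hSeq _ hmem]
          exact (key _ _ (adjZA _)).symm
        · -- B A(m)
          refine (key _ _ (adjAB (i := m) ?_)).symm
          intro hE
          exact hmS (hE ▸ (σ ⟨s.val, hs⟩).2)
        · exfalso; omega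
        · exfalso; omega
        · -- Z A(m)
          exact key _ _ (adjZA m)
        · exfalso; omega
        · exfalso; omega
        · exfalso; omega
      intro s t hst
      have hstv : s.val ≠ t.val := fun hE => hst (Fin.ext hE)
      rcases lt_or_gt_of_ne hstv with hlt | hlt
      · exact main s t hlt
      · exact (main t s hlt).symm
    · -- main case: k = |S| ≤ n, ≠ n-1
      have hcompl : Sᶜ.card = n - S.card := by
        rw [Finset.card_compl, Fintype.card_fin]
      set σ := S.orderIsoOfFin rfl with hσ
      set τ := Sᶜ.orderIsoOfFin hcompl with hτ
      have hmemS : ∀ i, (σ i : Fin n) ∈ S := fun i => (σ i).2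
      have hmemC : ∀ p, (τ p : Fin n) ∉ S := fun p => Finset.mem_compl.mp (τ p).2
      have hστ : ∀ i p, (σ i : Fin n) ≠ (τ p : Fin n) := by
        intro i p hE
        exact hmemC p (hE ▸ hmemS i)
      have hσinj : ∀ i j, (σ i : Fin n) = (σ j : Fin n) → i = j := by
        intro i j hE
        exact σ.injective (Subtype.coe_injective hE)
      have hτinj : ∀ p q, (τ p : Fin n) = (τ q : Fin n) → p = q := by
        intro p q hE
        exact τ.injective (Subtype.coe_injective hE)
      set F : (Fin S.card ⊕ Fin (2*(n - S.card)+1)) → T := Sum.elim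
        (fun i => h (vB (σ i)))
        (fun w => if h0 : w.val = 0 then h (vZ n) else
          if hw : w.val ≤ n - S.card then h (vA (τ ⟨w.val - 1, by omega⟩)) else
            h (vB (τ ⟨w.val - (n - S.card) - 1, by omega⟩))) with hF
      have hcross : ∀ (i : Fin S.card) (w : Fin (2*(n - S.card)+1)),
          G.Adj (F (Sum.inl i)) (F (Sum.inr w)) := by
        intro i w
        rw [hF]
        simp only [Sum.elim_inl, Sum.elim_inr]
        split_ifs with h0 hw
        · rw [← hSeq _ (hmemS i)]
          exact (key _ _ (adjZA _)).symm
        · exact (key _ _ (adjAB (Ne.symm (hστ i _)))).symm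
        · exact key _ _ (adjBB (hστ i _))
      refine ⟨S.card, hkn, hS1, ⟨⟨F, ?_⟩, ?_⟩⟩
      · -- injectivity
        rintro (i | w) (j | w') hxy <;> rw [hF] at hxy <;>
          simp only [Sum.elim_inl, Sum.elim_inr] at hxy
        · refine congrArg Sum.inl ?_
          by_contra hne
          exact d1 _ _ (fun hE => hne (hσinj _ _ hE)) hxy
        · exfalso
          split_ifs at hxy with h0 hw
          · exact d5 _ hxy.symm
          · exact d3 _ _ (Ne.symm (hστ i _)) hxy.symm
          · exact d1 _ _ (hστ i _) hxy
        · exfalso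
          split_ifs at hxy with h0 hw
          · exact d5 _ hxy
          · exact d3 _ _ (Ne.symm (hστ j _)) hxy
          · exact d1 _ _ (hστ j _) hxy.symm
        · refine congrArg Sum.inr ?_
          split_ifs at hxy with h0 hw h0' hw' h0' hw'
          · exact Fin.ext (by omega)
          · exact absurd hxy (d2 _)
          · exact absurd hxy (d5 _)
          · exact absurd hxy.symm (d2 _)
          · -- A A
            refine Fin.ext (by_contra fun hne => ?_)
            refine d6 _ _ (fun hE => ?_) hxy
            have := congrArg Fin.val (hτinj _ _ hE)
            simp only at this
            omega
          · -- A B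
            exfalso
            rcases eq_or_ne ((τ ⟨w.val - 1, by omega⟩ : Fin n))
                ((τ ⟨w'.val - (n - S.card) - 1, by omega⟩ : Fin n)) with hE | hE
            · exact hSne _ (hmemC _) (hxy.trans (congrArg (fun z => h (vB z)) hE.symm))
            · exact d3 _ _ hE hxy
          · exact absurd hxy.symm (d5 _)
          · -- B A
            exfalso
            rcases eq_or_ne ((τ ⟨w'.val - 1, by omega⟩ : Fin n))
                ((τ ⟨w.val - (n - S.card) - 1, by omega⟩ : Fin n)) with hE | hE
            · exact hSne _ (hmemC _) (hxy.symm.trans (congrArg (fun z => h (vB z)) hE.symm))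
            · exact d3 _ _ hE hxy.symm
          · -- B B
            refine Fin.ext (by_contra fun hne => ?_)
            refine d1 _ _ (fun hE => ?_) hxy
            have := congrArg Fin.val (hτinj _ _ hE)
            simp only at this
            omega
      · -- edge preservation
        rintro (i | w) (j | w') hadj
        · refine key _ _ (adjBB ?_)
          have hne := (join_ll _ _ i j).mp hadj
          exact fun hE => hne (hσinj _ _ hE)
        · exact hcross i w'
        · exact (hcross j w).symm
        · have hmyc := (join_rr _ _ w w').mp hadj
          rw [myc_adj_iff] at hmyc
          show G.Adj (F (Sum.inr w)) (F (Sum.inr w'))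
          rw [hF]
          simp only [Sum.elim_inr]
          split_ifs with h0 hw h0' hw' h0' hw'
          · exfalso; omega
          · exact key _ _ (adjZA _)
          · exfalso; omega
          · exact (key _ _ (adjZA _)).symm
          · exfalso; omega
          · -- A B
            refine key _ _ (adjAB ?_)
            intro hE
            have := congrArg Fin.val (hτinj _ _ hE)
            simp only at this
            omega
          · exfalso; omega
          · -- B A
            refine (key _ _ (adjAB ?_)).symm
            intro hE
            have := congrArg Fin.val (hτinj _ _ hE)
            simp only at this
            omega
          · -- B B
            refine key _ _ (adjBB ?_)
            intro hE
            have := congrArg Fin.val (hτinj _ _ hE)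
            simp only at this
            omega
end Part3

lemma myc_clique_bound (m : ℕ) (hm : 2 ≤ m) (Q : Finset (Fin (2*m+1)))
    (hQ : ∀ x ∈ Q, ∀ y ∈ Q, x ≠ y → (Myc m).Adj x y) : Q.card ≤ m := by
  by_contra hc
  push_neg at hc
  -- no vertex of value 0
  have h0 : ∀ q ∈ Q, 1 ≤ q.val := by
    intro z hz
    by_contra h0
    push_neg at h0
    have hz0 : z.val = 0 := by omega
    have : 2 ≤ (Q.erase z).card := by
      have := Finset.card_erase_of_mem hz
      omega
    obtain ⟨q1, hq1, q2, hq2, hq12⟩ := Finset.one_lt_card.mp (show 1 < (Q.erase z).card by omega)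
    have hq1Q := Finset.mem_of_mem_erase hq1
    have hq2Q := Finset.mem_of_mem_erase hq2
    have hq1z := Finset.ne_of_mem_erase hq1
    have hq2z := Finset.ne_of_mem_erase hq2
    have a1 := hQ _ hq1Q _ hz hq1z
    have a2 := hQ _ hq2Q _ hz hq2z
    have a3 := hQ _ hq1Q _ hq2Q hq12
    rw [myc_adj_iff] at a1 a2 a3
    omega
  have hmaps : ∀ q ∈ Q, (if q.val ≤ m then q.val else q.val - m) ∈ Finset.Icc 1 m := by
    intro q hq
    have := h0 q hq
    have := q.isLt
    rw [Finset.mem_Icc]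
    split_ifs <;> omega
  have hinj : ∀ q ∈ Q, ∀ q' ∈ Q,
      (if q.val ≤ m then q.val else q.val - m) = (if q'.val ≤ m then q'.val else q'.val - m) →
      q = q' := by
    intro q hq q' hq' hE
    by_contra hne
    have hadj := hQ _ hq _ hq' hne
    rw [myc_adj_iff] at hadj
    have := h0 q hq
    have := h0 q' hq'
    split_ifs at hE <;> omega
  have := Finset.card_le_card_of_injOn _ hmaps hinj
  rw [Nat.card_Icc] at this
  omega

lemma part4 (n k l : ℕ) (hk : k ≤ n) (hl : l ≤ n) (hk1 : k ≠ n-1) (hl1 : l ≠ n-1)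
    (hkl : k ≠ l) :
    ¬ SubIso (GraphJoin (completeGraph (Fin k)) (Myc (n-k)))
        (GraphJoin (completeGraph (Fin l)) (Myc (n-l))) := by
  classical
  rintro ⟨f, hf⟩
  rcases Nat.lt_or_ge k l with hlt | hge
  · -- more vertices in source than target
    have hcard := Fintype.card_le_of_embedding f
    simp only [Fintype.card_sum, Fintype.card_fin] at hcard
    omega
  have hgt : l < k := by omega
  have hl2 : l ≤ n - 2 := by omega
  have hm2 : 2 ≤ n - l := by omega
  by_cases hkn : k = n
  · -- source is a clique on n+1 vertices, target has clique number n
    have hsrc : ∀ u v : Fin k ⊕ Fin (2*(n-k)+1), u ≠ v →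
        (GraphJoin (completeGraph (Fin k)) (Myc (n-k))).Adj u v := by
      rintro (i | w) (j | w') huv
      · exact (join_ll _ _ i j).mpr (fun hE => huv (congrArg Sum.inl hE))
      · exact join_lr _ _ _ _
      · exact join_rl _ _ _ _
      · exact absurd (congrArg Sum.inr (Fin.ext (by omega : w.val = w'.val))) huv
    set P : Finset (Fin l ⊕ Fin (2*(n-l)+1)) := Finset.univ.image f with hP
    have hPcard : P.card = n + 1 := by
      rw [hP, Finset.card_image_of_injective _ f.injective]
      simp only [Finset.card_univ, Fintype.card_sum, Fintype.card_fin]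
      omega
    have hPadj : ∀ x ∈ P, ∀ y ∈ P, x ≠ y →
        (GraphJoin (completeGraph (Fin l)) (Myc (n-l))).Adj x y := by
      intro x hx y hy hxy
      obtain ⟨u, _, hu⟩ := Finset.mem_image.mp hx
      obtain ⟨v, _, hv⟩ := Finset.mem_image.mp hy
      subst hu hv
      exact hf u v (hsrc u v (fun hE => hxy (congrArg f hE)))
    set Q : Finset (Fin (2*(n-l)+1)) :=
      Finset.univ.filter (fun y => Sum.inr y ∈ P) with hQ
    have hPsub : P ⊆ (Finset.univ.image Sum.inl) ∪ (Q.image Sum.inr) := by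
      intro p hp
      rcases p with x | y
      · exact Finset.mem_union_left _ (Finset.mem_image.mpr ⟨x, Finset.mem_univ x, rfl⟩)
      · exact Finset.mem_union_right _ (Finset.mem_image.mpr
          ⟨y, Finset.mem_filter.mpr ⟨Finset.mem_univ y, hp⟩, rfl⟩)
    have hQcard : n + 1 ≤ l + Q.card := by
      have h1 := Finset.card_le_card hPsub
      have h2 := Finset.card_union_le (Finset.univ.image (Sum.inl : Fin l → _))
        (Q.image Sum.inr)
      have h3 : (Finset.univ.image (Sum.inl : Fin l → Fin l ⊕ Fin (2*(n-l)+1))).card ≤ l := by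
        calc _ ≤ (Finset.univ : Finset (Fin l)).card := Finset.card_image_le
        _ = l := by simp
      have h4 : (Q.image (Sum.inr : Fin (2*(n-l)+1) → Fin l ⊕ _)).card ≤ Q.card :=
        Finset.card_image_le
      omega
    have hQadj : ∀ x ∈ Q, ∀ y ∈ Q, x ≠ y → (Myc (n-l)).Adj x y := by
      intro x hx y hy hxy
      have hx' := (Finset.mem_filter.mp hx).2
      have hy' := (Finset.mem_filter.mp hy).2
      exact (join_rr _ _ x y).mp (hPadj _ hx' _ hy' (fun hE => hxy (Sum.inr.inj hE)))
    have := myc_clique_bound (n-l) hm2 Q hQadj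
    omega
  · -- l < k < n
    have hkn' : k < n := by omega
    -- each join vertex of the source is adjacent (in target) to all other image vertices
    have hdom : ∀ (i : Fin k) (z : Fin k ⊕ Fin (2*(n-k)+1)), z ≠ Sum.inl i →
        (GraphJoin (completeGraph (Fin l)) (Myc (n-l))).Adj (f (Sum.inl i)) (f z) := by
      intro i z hz
      refine hf _ _ ?_
      rcases z with j | w
      · exact (join_ll _ _ i j).mpr (fun hE => hz (congrArg Sum.inl hE.symm))
      · exact (join_lr _ _ _ _)
    -- counting setup
    have hEcard : (Finset.univ.image f).card = k + (2*(n-k)+1) := by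
      rw [Finset.card_image_of_injective _ f.injective]
      simp only [Finset.card_univ, Fintype.card_sum, Fintype.card_fin]
    have htot : (Finset.univ : Finset (Fin l ⊕ Fin (2*(n-l)+1))).card = l + (2*(n-l)+1) := by
      simp only [Finset.card_univ, Fintype.card_sum, Fintype.card_fin]
    -- step 1: f (inl i) is never the 0-vertex or an a-vertex of the target M part
    have hstep1 : ∀ (i : Fin k) (y : Fin (2*(n-l)+1)), f (Sum.inl i) = Sum.inr y →
        n - l + 1 ≤ y.val := by
      intro i y hEq
      by_contra hsmall
      push_neg at hsmall
      -- the m' = n-l non-neighbours of y avoid the image of f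
      set W : Finset (Fin l ⊕ Fin (2*(n-l)+1)) := Finset.univ.image
        (fun j : Fin (n-l) => (Sum.inr (if j.val + 1 = y.val then ⟨(n-l) + y.val, by omega⟩
          else if y.val = 0 then ⟨(n-l) + 1 + j.val, by omega⟩ else ⟨j.val + 1, by omega⟩) :
          Fin l ⊕ Fin (2*(n-l)+1))) with hW
      have hWcard : W.card = n - l := by
        rw [hW, Finset.card_image_of_injective, Finset.card_univ, Fintype.card_fin]
        intro p q hpq
        have hpq' := Sum.inr.inj hpq
        have hv := congrArg Fin.val hpq'
        split_ifs at hv <;> simp only [Fin.val_mk] at hv <;> exact Fin.ext (by omega)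
      have hWnoim : ∀ w ∈ W, w ∉ Finset.univ.image f := by
        intro w hw hwim
        obtain ⟨j, _, hj⟩ := Finset.mem_image.mp (hW ▸ hw)
        obtain ⟨z, _, hz⟩ := Finset.mem_image.mp hwim
        subst hj
        have hzi : z ≠ Sum.inl i := by
          intro hE
          rw [hE, hEq] at hz
          have := congrArg Fin.val (Sum.inr.inj hz)
          split_ifs at this <;> simp only [Fin.val_mk] at this <;> omega
        have hadj := (hdom i z hzi)
        rw [hz, hEq, join_rr, myc_adj_iff] at hadj
        split_ifs at hadj <;> simp only [Fin.val_mk, false_and, false_or] at hadj <;> omega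
      have hdisj : Disjoint (Finset.univ.image f) W :=
        Finset.disjoint_right.mpr (fun w hw => hWnoim w hw)
      have hsub : (Finset.univ.image f) ∪ W ⊆ Finset.univ := Finset.subset_univ _
      have := Finset.card_le_card hsub
      rw [Finset.card_union_of_disjoint hdisj, hEcard, hWcard, htot] at this
      omega
    -- J: the b-vertices of the target hit by join vertices of the source
    set J : Finset (Fin (2*(n-l)+1)) := Finset.univ.filter
      (fun y => ∃ i : Fin k, f (Sum.inl i) = Sum.inr y) with hJ
    have hJb : ∀ y ∈ J, n - l + 1 ≤ y.val := by
      intro y hy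
      obtain ⟨i, hi⟩ := (Finset.mem_filter.mp hy).2
      exact hstep1 i y hi
    -- step 2: k ≤ l + J.card
    have hstep2 : k ≤ l + J.card := by
      have hsub : (Finset.univ.image (fun i : Fin k => f (Sum.inl i))) ⊆
          (Finset.univ.image (Sum.inl : Fin l → _)) ∪ (J.image Sum.inr) := by
        intro p hp
        obtain ⟨i, _, hi⟩ := Finset.mem_image.mp hp
        rcases hp' : f (Sum.inl i) with x | y
        · rw [← hi, hp']
          exact Finset.mem_union_left _ (Finset.mem_image.mpr ⟨x, Finset.mem_univ x, rfl⟩)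
        · rw [← hi, hp']
          refine Finset.mem_union_right _ (Finset.mem_image.mpr ⟨y, ?_, rfl⟩)
          exact Finset.mem_filter.mpr ⟨Finset.mem_univ y, ⟨i, hp'⟩⟩
      have h1 := Finset.card_le_card hsub
      have h2 := Finset.card_union_le (Finset.univ.image (Sum.inl : Fin l → _))
        (J.image (Sum.inr : Fin (2*(n-l)+1) → _))
      have h3 : (Finset.univ.image (fun i : Fin k => f (Sum.inl i))).card = k := by
        rw [Finset.card_image_of_injective, Finset.card_univ, Fintype.card_fin]
        exact fun a b hab => Sum.inl.inj (f.injective hab)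
      have h4 : (Finset.univ.image (Sum.inl : Fin l → Fin l ⊕ Fin (2*(n-l)+1))).card ≤ l := by
        calc _ ≤ (Finset.univ : Finset (Fin l)).card := Finset.card_image_le
        _ = l := by simp
      have h5 : (J.image (Sum.inr : Fin (2*(n-l)+1) → Fin l ⊕ _)).card ≤ J.card :=
        Finset.card_image_le
      omega
    -- step 3: for each y ∈ J the corresponding a-vertex is not in the image, nor is 0
    have hstep3a : ∀ y ∈ J, ∀ z, f z ≠ (Sum.inr ⟨y.val - (n-l), by omega⟩ :
        Fin l ⊕ Fin (2*(n-l)+1)) := by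
      intro y hy z hz
      have hyb := hJb y hy
      obtain ⟨i, hi⟩ := (Finset.mem_filter.mp hy).2
      have hzi : z ≠ Sum.inl i := by
        intro hE
        rw [hE, hi] at hz
        have := congrArg Fin.val (Sum.inr.inj hz)
        simp only [Fin.val_mk] at this
        omega
      have hadj := hdom i z hzi
      rw [hz, hi, join_rr, myc_adj_iff] at hadj
      simp only [Fin.val_mk] at hadj
      have := y.isLt
      omega
    have hstep3z : ∀ y ∈ J, ∀ z, f z ≠ (Sum.inr ⟨0, by omega⟩ : Fin l ⊕ Fin (2*(n-l)+1)) := by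
      intro y hy z hz
      have hyb := hJb y hy
      obtain ⟨i, hi⟩ := (Finset.mem_filter.mp hy).2
      have hzi : z ≠ Sum.inl i := by
        intro hE
        rw [hE, hi] at hz
        have := congrArg Fin.val (Sum.inr.inj hz)
        simp only [Fin.val_mk] at this
        omega
      have hadj := hdom i z hzi
      rw [hz, hi, join_rr, myc_adj_iff] at hadj
      simp only [Fin.val_mk] at hadj
      omega
    -- J is nonempty
    have hJpos : 1 ≤ J.card := by omega
    obtain ⟨y0, hy0⟩ := Finset.card_pos.mp (by omega : 0 < J.card)
    -- final count
    set W1 : Finset (Fin l ⊕ Fin (2*(n-l)+1)) := J.image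
      (fun y => Sum.inr ⟨y.val - (n-l), by omega⟩) with hW1
    have hW1card : W1.card = J.card := by
      rw [hW1]
      apply Finset.card_image_of_injOn
      intro p hp q hq hpq
      have hpb := hJb p hp
      have hqb := hJb q hq
      have := congrArg Fin.val (Sum.inr.inj hpq)
      simp only [Fin.val_mk] at this
      exact Fin.ext (by omega)
    set W2 : Finset (Fin l ⊕ Fin (2*(n-l)+1)) := {Sum.inr ⟨0, by omega⟩} with hW2
    have hd1 : Disjoint (Finset.univ.image f) W1 := by
      rw [Finset.disjoint_right]
      intro w hw hwim
      obtain ⟨y, hy, hyw⟩ := Finset.mem_image.mp (hW1 ▸ hw)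
      obtain ⟨z, _, hz⟩ := Finset.mem_image.mp hwim
      exact hstep3a y hy z (by rw [hz, ← hyw])
    have hd2 : Disjoint (Finset.univ.image f) W2 := by
      rw [Finset.disjoint_right]
      intro w hw hwim
      rw [hW2, Finset.mem_singleton] at hw
      obtain ⟨z, _, hz⟩ := Finset.mem_image.mp hwim
      exact hstep3z y0 hy0 z (by rw [hz, hw])
    have hd3 : Disjoint W1 W2 := by
      rw [Finset.disjoint_left]
      intro w hw hw2
      obtain ⟨y, hy, hyw⟩ := Finset.mem_image.mp (hW1 ▸ hw)
      rw [hW2, Finset.mem_singleton] at hw2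
      have hyb := hJb y hy
      rw [← hyw] at hw2
      have := congrArg Fin.val (Sum.inr.inj hw2)
      simp only [Fin.val_mk] at this
      omega
    have hsub : (Finset.univ.image f) ∪ W1 ∪ W2 ⊆ Finset.univ := Finset.subset_univ _
    have hcard := Finset.card_le_card hsub
    rw [Finset.card_union_of_disjoint (by
        rw [Finset.disjoint_union_left]; exact ⟨hd2, hd3⟩),
      Finset.card_union_of_disjoint hd1, hEcard, hW1card, htot] at hcard
    have hW2card : W2.card = 1 := by rw [hW2]; exact Finset.card_singleton _
    omega

/-- (i) `χ(M n) = n+1`; (ii) each `K k ✶ M (n-k)` (`k ≤ n`) is a homomorphic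
image of `M n`; (iii) every homomorphic image of `M n` contains some `K k ✶ M (n-k)` with
`k ≤ n`, `k ≠ n-1`, as a subgraph; (iv) the graphs `K k ✶ M (n-k)` for `k ≤ n`, `k ≠ n-1`
are pairwise incomparable under subgraph containment; and (v) there are exactly `n` such
values of `k`, so `ℋ(M n)` has exactly `n` elements. -/
theorem stmt_12 (n : ℕ) (hn : 1 ≤ n) :
    (Myc n).chromaticNumber = ((n : ℕ∞) + 1) ∧
    (∀ k, k ≤ n →
      ∃ h : Fin (2 * n + 1) → (Fin k ⊕ Fin (2 * (n - k) + 1)),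
        Function.Surjective h ∧ (∀ u v, (Myc n).Adj u v → h u ≠ h v) ∧
        ∀ x y, (GraphJoin (completeGraph (Fin k)) (Myc (n - k))).Adj x y ↔
          HomImageAdj (Myc n) h x y) ∧
    (∀ (T : Type) (h : Fin (2 * n + 1) → T), Function.Surjective h →
      (∀ u v, (Myc n).Adj u v → h u ≠ h v) →
      ∃ k, k ≤ n ∧ k ≠ n - 1 ∧
        SubIso (GraphJoin (completeGraph (Fin k)) (Myc (n - k)))
          (SimpleGraph.fromRel (HomImageAdj (Myc n) h))) ∧
    (∀ k l, k ≤ n → l ≤ n → k ≠ n - 1 → l ≠ n - 1 → k ≠ l →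
      ¬ SubIso (GraphJoin (completeGraph (Fin k)) (Myc (n - k)))
          (GraphJoin (completeGraph (Fin l)) (Myc (n - l)))) ∧
    ((Finset.range (n + 1)).filter (fun k => k ≠ n - 1)).card = n := by
  refine ⟨myc_chrom n hn, ?_, ?_, ?_, ?_⟩
  · intro k hk
    exact ⟨hmap n k hk, hmap_surj n k hk, hmap_noncollapse n k hk, part2_iff n k hk⟩
  · intro T h _ hnc
    exact part3 h hn hnc
  · intro k l hk hl hk1 hl1 hkl
    exact part4 n k l hk hl hk1 hl1 hkl
  · have hfe : (Finset.range (n+1)).filter (fun k => k ≠ n - 1) =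
        (Finset.range (n+1)).erase (n-1) := Finset.filter_ne' _ _
    rw [hfe, Finset.card_erase_of_mem (Finset.mem_range.mpr (by omega)), Finset.card_range]
    omega
end

section
/- Let n ≥ 1 and let C = T₁+·T₂+·P_n. Let G be a graph and u a vertex of G. Suppose that there are two paths of length 5n in G originating at u which are disjoint except for the common vertex u, and that for some k with 0 ≤ k ≤ n there is a subgraph of G isomorphic to T₁+·T₂+·P_k via an isomorphism sending the terminal vertex y_k of the path to u. Then C is isomorphic to a subgraph of G. -/
open FirstOrder SimpleGraph

/-- The graph `T₁ +· T₂ +· P n`: two triangles `{u₁, u₁', u₂}` and `{u₂, u₃, y₀}` sharing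
exactly the vertex `u₂`, with a path `y₀ y₁ ⋯ y_n` of length `n` attached at `y₀`.
Encoding in `Fin (n+5)`: `0 = u₁`, `1 = u₁'`, `2 = u₂`, `3 = u₃`, `4 + i = y_i`. -/
def TTP (n : ℕ) : SimpleGraph (Fin (n + 5)) :=
  SimpleGraph.fromRel (fun x y =>
    (x.val = 0 ∧ y.val = 1) ∨ (x.val = 0 ∧ y.val = 2) ∨ (x.val = 1 ∧ y.val = 2) ∨
    (x.val = 2 ∧ y.val = 3) ∨ (x.val = 2 ∧ y.val = 4) ∨ (x.val = 3 ∧ y.val = 4) ∨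
    (∃ i, i < n ∧ x.val = 4 + i ∧ y.val = 5 + i))



private lemma extendClean (P : ℕ → Prop) (N a b : ℕ) (hab : a ≤ b) (hbN : b ≤ N)
    (hcl : ∀ t, a ≤ t → t ≤ b → ¬ P t) :
    ∃ a' b', a' ≤ a ∧ b ≤ b' ∧ b' ≤ N ∧ (∀ t, a' ≤ t → t ≤ b' → ¬ P t) ∧
      (a' = 0 ∨ (1 ≤ a' ∧ P (a' - 1))) ∧ (b' = N ∨ (b' < N ∧ P (b' + 1))) := by
  classical
  have down : ∀ a0, a0 ≤ b → (∀ t, a0 ≤ t → t ≤ b → ¬ P t) →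
      ∃ a', a' ≤ a0 ∧ (∀ t, a' ≤ t → t ≤ b → ¬ P t) ∧ (a' = 0 ∨ (1 ≤ a' ∧ P (a' - 1))) := by
    intro a0
    induction a0 with
    | zero => intro _ hcl; exact ⟨0, le_refl _, hcl, Or.inl rfl⟩
    | succ m ih =>
      intro hm hcl
      by_cases hPm : P m
      · exact ⟨m + 1, le_refl _, hcl, Or.inr ⟨by omega, by simpa using hPm⟩⟩
      · obtain ⟨a', h1, h2, h3⟩ := ih (by omega)
          (fun t ht htb => by
            rcases Nat.eq_or_lt_of_le ht with h | h
            · subst h; exact hPm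
            · exact hcl t (by omega) htb)
        exact ⟨a', by omega, h2, h3⟩
  have up : ∀ al m b0, b0 ≤ N → N - b0 ≤ m → (∀ t, al ≤ t → t ≤ b0 → ¬ P t) →
      ∃ b', b0 ≤ b' ∧ b' ≤ N ∧ (∀ t, al ≤ t → t ≤ b' → ¬ P t) ∧
        (b' = N ∨ (b' < N ∧ P (b' + 1))) := by
    intro al m
    induction m with
    | zero => intro b0 h1 h2 hcl; exact ⟨b0, le_refl _, h1, hcl, Or.inl (by omega)⟩
    | succ mm ih =>
      intro b0 h1 h2 hcl
      rcases Nat.eq_or_lt_of_le h1 with hb | hb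
      · exact ⟨b0, le_refl _, h1, hcl, Or.inl hb⟩
      · by_cases hP : P (b0 + 1)
        · exact ⟨b0, le_refl _, h1, hcl, Or.inr ⟨hb, hP⟩⟩
        · obtain ⟨b', h3, h4, h5, h6⟩ := ih (b0 + 1) (by omega) (by omega)
            (fun t ht htb => by
              rcases Nat.eq_or_lt_of_le htb with h | h
              · subst h; exact hP
              · exact hcl t ht (by omega))
          exact ⟨b', by omega, h4, h5, h6⟩
  obtain ⟨a', ha1, ha2, ha3⟩ := down a hab hcl
  obtain ⟨b', hb1, hb2, hb3, hb4⟩ := up a' (N - b) b hbN (le_refl _) ha2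
  exact ⟨a', b', ha1, hb1, hb2, hb3, ha3, hb4⟩

private lemma pigeonWin {V : Type} (w : ℕ → V) (P : ℕ → Prop) (n N cnt lo : ℕ)
    (hwinj : ∀ s t, s ≤ N → t ≤ N → w s = w t → s = t)
    (hbound : lo + cnt * n ≤ N + 1)
    (S : Finset V) (hcard : S.card < cnt)
    (hPS : ∀ t, lo ≤ t → t < lo + cnt * n → P t → w t ∈ S) :
    ∃ t0, lo ≤ t0 ∧ t0 + n ≤ lo + cnt * n ∧ ∀ s, t0 ≤ s → s < t0 + n → ¬ P s := by
  classical
  by_contra hcon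
  push_neg at hcon
  have hsel : ∀ j, j < cnt → ∃ s, lo + j * n ≤ s ∧ s < lo + j * n + n ∧ P s := by
    intro j hj
    have hmul : (j + 1) * n ≤ cnt * n := Nat.mul_le_mul_right n hj
    rw [Nat.succ_mul] at hmul
    obtain ⟨s, hs1, hs2, hs3⟩ := hcon (lo + j * n) (by omega) (by omega)
    exact ⟨s, hs1, hs2, hs3⟩
  have hV : Nonempty V := ⟨w 0⟩
  let sel : ℕ → ℕ := fun j => if hj : j < cnt then Classical.choose (hsel j hj) else 0
  have hselspec : ∀ j, j < cnt → lo + j * n ≤ sel j ∧ sel j < lo + j * n + n ∧ P (sel j) := by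
    intro j hj
    simp only [sel, dif_pos hj]
    exact Classical.choose_spec (hsel j hj)
  have hmaps : ∀ j ∈ Finset.range cnt, w (sel j) ∈ S := by
    intro j hj
    rw [Finset.mem_range] at hj
    obtain ⟨h1, h2, h3⟩ := hselspec j hj
    have hmul : (j + 1) * n ≤ cnt * n := Nat.mul_le_mul_right n hj
    rw [Nat.succ_mul] at hmul
    exact hPS _ (by omega) (by omega) h3
  obtain ⟨i, hi, j, hj, hne, heq⟩ :=
    Finset.exists_ne_map_eq_of_card_lt_of_maps_to (by simpa using hcard) hmaps
  rw [Finset.mem_range] at hi hj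
  obtain ⟨hi1, hi2, _⟩ := hselspec i hi
  obtain ⟨hj1, hj2, _⟩ := hselspec j hj
  have hmi : (i + 1) * n ≤ cnt * n := Nat.mul_le_mul_right n hi
  have hmj : (j + 1) * n ≤ cnt * n := Nat.mul_le_mul_right n hj
  rw [Nat.succ_mul] at hmi hmj
  have hseq : sel i = sel j := hwinj _ _ (by omega) (by omega) heq
  rcases Nat.lt_or_ge i j with h | h
  · have : (i + 1) * n ≤ j * n := Nat.mul_le_mul_right n h
    rw [Nat.succ_mul] at this
    omega
  · rcases Nat.lt_or_ge j i with h' | h'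
    · have : (j + 1) * n ≤ i * n := Nat.mul_le_mul_right n h'
      rw [Nat.succ_mul] at this
      omega
    · exact hne (by omega)


section keysec
variable {V : Type}

private lemma card5 [DecidableEq V] (A B M D E : V) : ({A, B, M, D, E} : Finset V).card ≤ 5 := by
  classical
  apply le_trans (Finset.card_insert_le _ _)
  have h1 : ({B, M, D, E} : Finset V).card ≤ 4 := by
    apply le_trans (Finset.card_insert_le _ _)
    have h2 : ({M, D, E} : Finset V).card ≤ 3 := by
      apply le_trans (Finset.card_insert_le _ _)
      have h3 : ({D, E} : Finset V).card ≤ 2 := by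
        apply le_trans (Finset.card_insert_le _ _)
        simp
      omega
    omega
  omega

private lemma card4 [DecidableEq V] (A B D E : V) : ({A, B, D, E} : Finset V).card ≤ 4 := by
  classical
  apply le_trans (Finset.card_insert_le _ _)
  have h2 : ({B, D, E} : Finset V).card ≤ 3 := by
    apply le_trans (Finset.card_insert_le _ _)
    have h3 : ({D, E} : Finset V).card ≤ 2 := by
      apply le_trans (Finset.card_insert_le _ _)
      simp
    omega
  omega
end keysec


private lemma routeWup {V : Type} (G : SimpleGraph V) (n : ℕ) (w : ℕ → V)
    (hwinj : ∀ s t, s ≤ 10*n → t ≤ 10*n → w s = w t → s = t)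
    (hwadj : ∀ t, t < 10*n → G.Adj (w t) (w (t+1)))
    (A B M D E : V) (start : ℕ)
    (hup : start + n ≤ 10*n)
    (hclean : ∀ i, 1 ≤ i → i ≤ n →
      w (start + i) ≠ A ∧ w (start + i) ≠ B ∧ w (start + i) ≠ M ∧
      w (start + i) ≠ D ∧ w (start + i) ≠ E) :
    ∃ z : ℕ → V, z 0 = w start ∧ (∀ i, i < n → G.Adj (z i) (z (i+1))) ∧
      (∀ i j, i ≤ n → j ≤ n → z i = z j → i = j) ∧
      (∀ i, 1 ≤ i → i ≤ n → z i ≠ A ∧ z i ≠ B ∧ z i ≠ M ∧ z i ≠ D ∧ z i ≠ E) := by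
  refine ⟨fun i => w (start + i), by simp, ?_, ?_, ?_⟩
  · intro i hi
    dsimp only
    have h3 : start + (i + 1) = (start + i) + 1 := by omega
    rw [h3]
    exact hwadj (start + i) (by omega)
  · intro i j hi hj hij
    dsimp only at hij
    have := hwinj _ _ (by omega) (by omega) hij
    omega
  · intro i h1 hi
    exact hclean i h1 hi

private lemma routeWdn {V : Type} (G : SimpleGraph V) (n : ℕ) (w : ℕ → V)
    (hwinj : ∀ s t, s ≤ 10*n → t ≤ 10*n → w s = w t → s = t)
    (hwadj : ∀ t, t < 10*n → G.Adj (w t) (w (t+1)))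
    (A B M D E : V) (start : ℕ)
    (hstart : start ≤ 10*n) (hdn : n ≤ start)
    (hclean : ∀ i, 1 ≤ i → i ≤ n →
      w (start - i) ≠ A ∧ w (start - i) ≠ B ∧ w (start - i) ≠ M ∧
      w (start - i) ≠ D ∧ w (start - i) ≠ E) :
    ∃ z : ℕ → V, z 0 = w start ∧ (∀ i, i < n → G.Adj (z i) (z (i+1))) ∧
      (∀ i j, i ≤ n → j ≤ n → z i = z j → i = j) ∧
      (∀ i, 1 ≤ i → i ≤ n → z i ≠ A ∧ z i ≠ B ∧ z i ≠ M ∧ z i ≠ D ∧ z i ≠ E) := by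
  refine ⟨fun i => w (start - i), by simp, ?_, ?_, ?_⟩
  · intro i hi
    dsimp only
    have h2 : start - (i+1) + 1 = start - i := by omega
    have h3 := hwadj (start - (i+1)) (by omega)
    rw [h2] at h3
    exact h3.symm
  · intro i j hi hj hij
    dsimp only at hij
    have := hwinj _ _ (by omega) (by omega) hij
    omega
  · intro i h1 hi
    exact hclean i h1 hi


private lemma routeB {V : Type} (G : SimpleGraph V) (n k : ℕ) (w : ℕ → V)
    (hwinj : ∀ s t, s ≤ 10*n → t ≤ 10*n → w s = w t → s = t)
    (hwadj : ∀ t, t < 10*n → G.Adj (w t) (w (t+1)))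
    (ch : ℕ → V) (hchinj : ∀ i j, i ≤ k → j ≤ k → ch i = ch j → i = j)
    (hchadj : ∀ i, i < k → G.Adj (ch i) (ch (i+1)))
    (A B M D : V)
    (hchA : ∀ i, i ≤ k → ch i ≠ A) (hchB : ∀ i, i ≤ k → ch i ≠ B)
    (hchM : ∀ i, i ≤ k → ch i ≠ M) (hchD : ∀ i, i ≤ k → ch i ≠ D)
    (hkn : k ≤ n)
    (a b : ℕ) (hbN : b ≤ 10*n) (hsize : a + 2*n ≤ b)
    (hclean : ∀ t, a ≤ t → t ≤ b →
      w t ≠ A ∧ w t ≠ B ∧ w t ≠ M ∧ w t ≠ D ∧ w t ≠ ch 0)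
    (hco : ∃ j t, j ≤ k ∧ a ≤ t ∧ t ≤ b ∧ ch j = w t) :
    ∃ z : ℕ → V, z 0 = ch 0 ∧ (∀ i, i < n → G.Adj (z i) (z (i+1))) ∧
      (∀ i j, i ≤ n → j ≤ n → z i = z j → i = j) ∧
      (∀ i, 1 ≤ i → i ≤ n → z i ≠ A ∧ z i ≠ B ∧ z i ≠ M ∧ z i ≠ D ∧ z i ≠ ch 0) := by
  classical
  have hQex : ∃ j, j ≤ k ∧ ∃ t, a ≤ t ∧ t ≤ b ∧ ch j = w t := by
    obtain ⟨j, t, h1, h2, h3, h4⟩ := hco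
    exact ⟨j, h1, t, h2, h3, h4⟩
  set J := Nat.find hQex with hJdef
  obtain ⟨hJk, T, haT, hTb, hchJ⟩ := Nat.find_spec hQex
  have hJmin : ∀ i, i < J → ∀ t, a ≤ t → t ≤ b → ch i ≠ w t := by
    intro i hi t h1 h2 hcon
    exact Nat.find_min hQex hi ⟨by omega, t, h1, h2, hcon⟩
  by_cases hdir : T + (n - J) ≤ b
  · -- go up
    refine ⟨fun i => if i ≤ J then ch i else w (T + (i - J)), by simp, ?_, ?_, ?_⟩
    · intro i hi
      dsimp only
      by_cases h1 : i + 1 ≤ J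
      · rw [if_pos (show i ≤ J by omega), if_pos h1]
        exact hchadj i (by omega)
      · by_cases h2 : i ≤ J
        · have hiJ : i = J := by omega
          rw [if_pos h2, if_neg h1, hiJ, hchJ]
          have h3 : T + (J + 1 - J) = T + 1 := by omega
          rw [h3]
          exact hwadj T (by omega)
        · rw [if_neg h2, if_neg h1]
          have h3 : T + (i + 1 - J) = (T + (i - J)) + 1 := by omega
          rw [h3]
          exact hwadj _ (by omega)
    · intro i j hi hj hij
      dsimp only at hij
      by_cases h1 : i ≤ J <;> by_cases h2 : j ≤ J
      · rw [if_pos h1, if_pos h2] at hij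
        exact hchinj _ _ (by omega) (by omega) hij
      · rw [if_pos h1, if_neg h2] at hij
        exfalso
        by_cases h3 : i < J
        · exact hJmin i h3 _ (by omega) (by omega) hij
        · have h4 : i = J := by omega
          subst h4
          rw [hchJ] at hij
          have := hwinj _ _ (by omega) (by omega) hij
          omega
      · rw [if_neg h1, if_pos h2] at hij
        exfalso
        by_cases h3 : j < J
        · exact hJmin j h3 _ (by omega) (by omega) hij.symm
        · have h4 : j = J := by omega
          subst h4
          rw [hchJ] at hij
          have := hwinj _ _ (by omega) (by omega) hij.symm
          omega
      · rw [if_neg h1, if_neg h2] at hij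
        have := hwinj _ _ (by omega) (by omega) hij
        omega
    · intro i hi1 hin
      dsimp only
      by_cases h1 : i ≤ J
      · rw [if_pos h1]
        refine ⟨hchA i (by omega), hchB i (by omega), hchM i (by omega), hchD i (by omega), ?_⟩
        intro hcon
        have := hchinj i 0 (by omega) (by omega) hcon
        omega
      · rw [if_neg h1]
        exact hclean (T + (i - J)) (by omega) (by omega)
  · -- go down
    have hdn : a + (n - J) ≤ T := by omega
    refine ⟨fun i => if i ≤ J then ch i else w (T - (i - J)), by simp, ?_, ?_, ?_⟩
    · intro i hi
      dsimp only
      by_cases h1 : i + 1 ≤ J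
      · rw [if_pos (show i ≤ J by omega), if_pos h1]
        exact hchadj i (by omega)
      · by_cases h2 : i ≤ J
        · have hiJ : i = J := by omega
          rw [if_pos h2, if_neg h1, hiJ, hchJ]
          have h4 : T - (J + 1 - J) + 1 = T := by omega
          have h5 := hwadj (T - (J + 1 - J)) (by omega)
          rw [h4] at h5
          exact h5.symm
        · rw [if_neg h2, if_neg h1]
          have h4 : T - (i - J) = (T - (i + 1 - J)) + 1 := by omega
          have h5 := hwadj (T - (i + 1 - J)) (by omega)
          rw [← h4] at h5
          exact h5.symm
    · intro i j hi hj hij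
      dsimp only at hij
      by_cases h1 : i ≤ J <;> by_cases h2 : j ≤ J
      · rw [if_pos h1, if_pos h2] at hij
        exact hchinj _ _ (by omega) (by omega) hij
      · rw [if_pos h1, if_neg h2] at hij
        exfalso
        by_cases h3 : i < J
        · exact hJmin i h3 _ (by omega) (by omega) hij
        · have h4 : i = J := by omega
          subst h4
          rw [hchJ] at hij
          have := hwinj _ _ (by omega) (by omega) hij
          omega
      · rw [if_neg h1, if_pos h2] at hij
        exfalso
        by_cases h3 : j < J
        · exact hJmin j h3 _ (by omega) (by omega) hij.symm
        · have h4 : j = J := by omega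
          subst h4
          rw [hchJ] at hij
          have := hwinj _ _ (by omega) (by omega) hij.symm
          omega
      · rw [if_neg h1, if_neg h2] at hij
        have := hwinj _ _ (by omega) (by omega) hij
        omega
    · intro i hi1 hin
      dsimp only
      by_cases h1 : i ≤ J
      · rw [if_pos h1]
        refine ⟨hchA i (by omega), hchB i (by omega), hchM i (by omega), hchD i (by omega), ?_⟩
        intro hcon
        have := hchinj i 0 (by omega) (by omega) hcon
        omega
      · rw [if_neg h1]
        exact hclean (T - (i - J)) (by omega) (by omega)

private lemma assemble {V : Type} (G : SimpleGraph V) (n : ℕ)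
    (X Y M W' : V) (z : ℕ → V)
    (hXY : G.Adj X Y) (hXM : G.Adj X M) (hYM : G.Adj Y M)
    (hMW : G.Adj M W') (hMz : G.Adj M (z 0)) (hWz : G.Adj W' (z 0))
    (hXW : X ≠ W') (hXz : X ≠ z 0) (hYW : Y ≠ W') (hYz : Y ≠ z 0)
    (hzadj : ∀ i, i < n → G.Adj (z i) (z (i+1)))
    (hzinj : ∀ i j, i ≤ n → j ≤ n → z i = z j → i = j)
    (hznot : ∀ i, 1 ≤ i → i ≤ n → z i ≠ X ∧ z i ≠ Y ∧ z i ≠ M ∧ z i ≠ W') :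
    SubIso (TTP n) G := by
  classical
  set g : Fin (n+5) → V := fun x =>
    if x.val = 0 then X else if x.val = 1 then Y else if x.val = 2 then M
    else if x.val = 3 then W' else z (x.val - 4) with hg
  have hg0 : ∀ x : Fin (n+5), x.val = 0 → g x = X := by
    intro x h; simp only [hg]; rw [if_pos h]
  have hg1 : ∀ x : Fin (n+5), x.val = 1 → g x = Y := by
    intro x h; simp only [hg]; rw [if_neg (by omega), if_pos h]
  have hg2 : ∀ x : Fin (n+5), x.val = 2 → g x = M := by
    intro x h; simp only [hg]; rw [if_neg (by omega), if_neg (by omega), if_pos h]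
  have hg3 : ∀ x : Fin (n+5), x.val = 3 → g x = W' := by
    intro x h; simp only [hg]; rw [if_neg (by omega), if_neg (by omega), if_neg (by omega), if_pos h]
  have hg4 : ∀ x : Fin (n+5), 4 ≤ x.val → g x = z (x.val - 4) := by
    intro x h
    simp only [hg]
    rw [if_neg (by omega), if_neg (by omega), if_neg (by omega), if_neg (by omega)]
  have hzX : ∀ i, i ≤ n → z i ≠ X := by
    intro i hi
    rcases Nat.eq_zero_or_pos i with h0 | h1
    · subst h0; exact fun hh => hXz hh.symm
    · exact (hznot i h1 hi).1
  have hzY : ∀ i, i ≤ n → z i ≠ Y := by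
    intro i hi
    rcases Nat.eq_zero_or_pos i with h0 | h1
    · subst h0; exact fun hh => hYz hh.symm
    · exact (hznot i h1 hi).2.1
  have hzM : ∀ i, i ≤ n → z i ≠ M := by
    intro i hi
    rcases Nat.eq_zero_or_pos i with h0 | h1
    · subst h0; exact fun hh => hMz.ne hh.symm
    · exact (hznot i h1 hi).2.2.1
  have hzW : ∀ i, i ≤ n → z i ≠ W' := by
    intro i hi
    rcases Nat.eq_zero_or_pos i with h0 | h1
    · subst h0; exact fun hh => hWz.ne hh.symm
    · exact (hznot i h1 hi).2.2.2
  have ginj : Function.Injective g := by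
    intro x y hxy
    by_cases hx : x.val ≤ 3 <;> by_cases hy : y.val ≤ 3
    · have hx0 : x.val = 0 ∨ x.val = 1 ∨ x.val = 2 ∨ x.val = 3 := by omega
      have hy0 : y.val = 0 ∨ y.val = 1 ∨ y.val = 2 ∨ y.val = 3 := by omega
      rcases hx0 with h|h|h|h <;> rcases hy0 with h'|h'|h'|h'
      · exact Fin.ext (by omega)
      · rw [hg0 x h, hg1 y h'] at hxy; exact absurd hxy hXY.ne
      · rw [hg0 x h, hg2 y h'] at hxy; exact absurd hxy hXM.ne
      · rw [hg0 x h, hg3 y h'] at hxy; exact absurd hxy hXW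
      · rw [hg1 x h, hg0 y h'] at hxy; exact absurd hxy.symm hXY.ne
      · exact Fin.ext (by omega)
      · rw [hg1 x h, hg2 y h'] at hxy; exact absurd hxy hYM.ne
      · rw [hg1 x h, hg3 y h'] at hxy; exact absurd hxy hYW
      · rw [hg2 x h, hg0 y h'] at hxy; exact absurd hxy.symm hXM.ne
      · rw [hg2 x h, hg1 y h'] at hxy; exact absurd hxy.symm hYM.ne
      · exact Fin.ext (by omega)
      · rw [hg2 x h, hg3 y h'] at hxy; exact absurd hxy hMW.ne
      · rw [hg3 x h, hg0 y h'] at hxy; exact absurd hxy.symm hXW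
      · rw [hg3 x h, hg1 y h'] at hxy; exact absurd hxy.symm hYW
      · rw [hg3 x h, hg2 y h'] at hxy; exact absurd hxy.symm hMW.ne
      · exact Fin.ext (by omega)
    · exfalso
      have h4 : 4 ≤ y.val := by omega
      rw [hg4 y h4] at hxy
      have hj : y.val - 4 ≤ n := by have := y.isLt; omega
      have hx0 : x.val = 0 ∨ x.val = 1 ∨ x.val = 2 ∨ x.val = 3 := by omega
      rcases hx0 with h|h|h|h
      · rw [hg0 x h] at hxy; exact hzX _ hj hxy.symm
      · rw [hg1 x h] at hxy; exact hzY _ hj hxy.symm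
      · rw [hg2 x h] at hxy; exact hzM _ hj hxy.symm
      · rw [hg3 x h] at hxy; exact hzW _ hj hxy.symm
    · exfalso
      have h4 : 4 ≤ x.val := by omega
      rw [hg4 x h4] at hxy
      have hj : x.val - 4 ≤ n := by have := x.isLt; omega
      have hy0 : y.val = 0 ∨ y.val = 1 ∨ y.val = 2 ∨ y.val = 3 := by omega
      rcases hy0 with h|h|h|h
      · rw [hg0 y h] at hxy; exact hzX _ hj hxy
      · rw [hg1 y h] at hxy; exact hzY _ hj hxy
      · rw [hg2 y h] at hxy; exact hzM _ hj hxy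
      · rw [hg3 y h] at hxy; exact hzW _ hj hxy
    · rw [hg4 x (by omega), hg4 y (by omega)] at hxy
      have := hzinj (x.val - 4) (y.val - 4) (by have := x.isLt; omega)
        (by have := y.isLt; omega) hxy
      exact Fin.ext (by omega)
  have hrel : ∀ x y : Fin (n+5),
      ((x.val = 0 ∧ y.val = 1) ∨ (x.val = 0 ∧ y.val = 2) ∨ (x.val = 1 ∧ y.val = 2) ∨
       (x.val = 2 ∧ y.val = 3) ∨ (x.val = 2 ∧ y.val = 4) ∨ (x.val = 3 ∧ y.val = 4) ∨
       (∃ i, i < n ∧ x.val = 4 + i ∧ y.val = 5 + i)) → G.Adj (g x) (g y) := by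
    rintro x y (⟨hx,hy⟩|⟨hx,hy⟩|⟨hx,hy⟩|⟨hx,hy⟩|⟨hx,hy⟩|⟨hx,hy⟩|⟨i,hi,hx,hy⟩)
    · rw [hg0 x hx, hg1 y hy]; exact hXY
    · rw [hg0 x hx, hg2 y hy]; exact hXM
    · rw [hg1 x hx, hg2 y hy]; exact hYM
    · rw [hg2 x hx, hg3 y hy]; exact hMW
    · rw [hg2 x hx, hg4 y (by omega)]
      have : y.val - 4 = 0 := by omega
      rw [this]; exact hMz
    · rw [hg3 x hx, hg4 y (by omega)]
      have : y.val - 4 = 0 := by omega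
      rw [this]; exact hWz
    · rw [hg4 x (by omega), hg4 y (by omega)]
      have h1 : x.val - 4 = i := by omega
      have h2 : y.val - 4 = i + 1 := by omega
      rw [h1, h2]
      exact hzadj i hi
  refine ⟨⟨g, ginj⟩, ?_⟩
  intro x y hxy
  rw [TTP, SimpleGraph.fromRel_adj] at hxy
  rcases hxy with ⟨hne, h | h⟩
  · exact hrel x y h
  · exact (hrel y x h).symm


private lemma key {V : Type} (G : SimpleGraph V) (n k : ℕ) (hn : 1 ≤ n) (hkn : k ≤ n)
    (w : ℕ → V)
    (hwinj : ∀ s t, s ≤ 10*n → t ≤ 10*n → w s = w t → s = t)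
    (hwadj : ∀ t, t < 10*n → G.Adj (w t) (w (t+1)))
    (ch : ℕ → V) (hchinj : ∀ i j, i ≤ k → j ≤ k → ch i = ch j → i = j)
    (hchadj : ∀ i, i < k → G.Adj (ch i) (ch (i+1)))
    (hchk : ch k = w (5*n))
    (A B M D : V)
    (hchA : ∀ i, i ≤ k → ch i ≠ A) (hchB : ∀ i, i ≤ k → ch i ≠ B)
    (hchM : ∀ i, i ≤ k → ch i ≠ M) (hchD : ∀ i, i ≤ k → ch i ≠ D) :
    ∃ (s : V) (z : ℕ → V), (s = A ∨ s = B ∨ s = D ∨ s = ch 0) ∧ z 0 = s ∧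
      (∀ i, i < n → G.Adj (z i) (z (i+1))) ∧
      (∀ i j, i ≤ n → j ≤ n → z i = z j → i = j) ∧
      (∀ i, 1 ≤ i → i ≤ n → z i ≠ A ∧ z i ≠ B ∧ z i ≠ M ∧ z i ≠ D ∧ z i ≠ ch 0) := by
  classical
  set E0 := ch 0 with hE0
  set Bad : ℕ → Prop := fun t => w t = A ∨ w t = B ∨ w t = M ∨ w t = D ∨ w t = E0
    with hBadDef
  have cleanConv : ∀ a' b', (∀ t, a' ≤ t → t ≤ b' → ¬ Bad t) →
      ∀ t, a' ≤ t → t ≤ b' → w t ≠ A ∧ w t ≠ B ∧ w t ≠ M ∧ w t ≠ D ∧ w t ≠ E0 := by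
    intro a' b' h t h1 h2
    have h3 := h t h1 h2
    simp only [hBadDef] at h3
    push_neg at h3
    exact h3
  have GoalOfW : ∀ start : ℕ, Bad start → w start ≠ M →
      (∃ z : ℕ → V, z 0 = w start ∧ (∀ i, i < n → G.Adj (z i) (z (i+1))) ∧
        (∀ i j, i ≤ n → j ≤ n → z i = z j → i = j) ∧
        (∀ i, 1 ≤ i → i ≤ n → z i ≠ A ∧ z i ≠ B ∧ z i ≠ M ∧ z i ≠ D ∧ z i ≠ E0)) →
      ∃ (s : V) (z : ℕ → V), (s = A ∨ s = B ∨ s = D ∨ s = ch 0) ∧ z 0 = s ∧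
        (∀ i, i < n → G.Adj (z i) (z (i+1))) ∧
        (∀ i j, i ≤ n → j ≤ n → z i = z j → i = j) ∧
        (∀ i, 1 ≤ i → i ≤ n → z i ≠ A ∧ z i ≠ B ∧ z i ≠ M ∧ z i ≠ D ∧ z i ≠ ch 0) := by
    rintro start hmem hM ⟨z, h0, h1, h2, h3⟩
    refine ⟨w start, z, ?_, h0, h1, h2, h3⟩
    simp only [hBadDef] at hmem
    rcases hmem with h | h | h | h | h
    · exact Or.inl h
    · exact Or.inr (Or.inl h)
    · exact absurd h hM
    · exact Or.inr (Or.inr (Or.inl h))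
    · exact Or.inr (Or.inr (Or.inr h))
  have GoalOfB :
      (∃ z : ℕ → V, z 0 = ch 0 ∧ (∀ i, i < n → G.Adj (z i) (z (i+1))) ∧
        (∀ i j, i ≤ n → j ≤ n → z i = z j → i = j) ∧
        (∀ i, 1 ≤ i → i ≤ n → z i ≠ A ∧ z i ≠ B ∧ z i ≠ M ∧ z i ≠ D ∧ z i ≠ ch 0)) →
      ∃ (s : V) (z : ℕ → V), (s = A ∨ s = B ∨ s = D ∨ s = ch 0) ∧ z 0 = s ∧
        (∀ i, i < n → G.Adj (z i) (z (i+1))) ∧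
        (∀ i j, i ≤ n → j ≤ n → z i = z j → i = j) ∧
        (∀ i, 1 ≤ i → i ≤ n → z i ≠ A ∧ z i ≠ B ∧ z i ≠ M ∧ z i ≠ D ∧ z i ≠ ch 0) := by
    rintro ⟨z, h0, h1, h2, h3⟩
    exact ⟨ch 0, z, Or.inr (Or.inr (Or.inr rfl)), h0, h1, h2, h3⟩
  have hwcM : w (5*n) ≠ M := fun h => hchM k le_rfl (hchk.trans h)
  -- first pigeonhole: 6 windows on [0, 6n)
  obtain ⟨t0, -, ht0b, ht0cl⟩ := pigeonWin w Bad n (10*n) 6 0 hwinj (by omega)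
    ({A, B, M, D, E0} : Finset V) (by have := card5 A B M D E0; omega)
    (by
      intro t _ _ hB
      simp only [hBadDef] at hB
      rcases hB with h | h | h | h | h <;> simp [h])
  obtain ⟨a, b, haT0, hT0b, hbN, hclean, hlo, hhi⟩ :=
    extendClean Bad (10*n) t0 (t0 + n - 1) (by omega) (by omega)
      (fun t h1 h2 => ht0cl t h1 (by omega))
  have habs : a + n ≤ b + 1 := by omega
  rcases hhi with hbTop | ⟨hbLt, hbBad⟩
  · -- b = 10n
    rcases hlo with haZero | ⟨haPos, haBad⟩
    · -- whole [0, 10n] clean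
      apply GoalOfB
      apply routeB G n k w hwinj hwadj ch hchinj hchadj A B M D hchA hchB hchM hchD hkn
        a b (by omega) (by omega) (cleanConv a b hclean)
      exact ⟨k, 5*n, le_rfl, by omega, by omega, hchk⟩
    · by_cases haM : w (a-1) = M
      · by_cases hca : a ≤ 5*n
        · apply GoalOfB
          apply routeB G n k w hwinj hwadj ch hchinj hchadj A B M D hchA hchB hchM hchD hkn
            a b (by omega) (by omega) (cleanConv a b hclean)
          exact ⟨k, 5*n, le_rfl, by omega, by omega, hchk⟩
        ·
          have hane : a - 1 ≠ 5*n := fun h => hwcM (h ▸ haM)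
          have ha2' : 5*n + 2 ≤ a := by omega
          obtain ⟨t1, ht1lo, ht1hi, ht1cl⟩ := pigeonWin w Bad n (10*n) 5 0 hwinj (by omega)
            ({A, B, D, E0} : Finset V) (by have := card4 A B D E0; omega)
            (by
              intro t ht1 ht2 hB
              simp only [hBadDef] at hB
              rcases hB with h | h | h | h | h
              · simp [h]
              · simp [h]
              · exfalso
                have := hwinj t (a-1) (by omega) (by omega) (h.trans haM.symm)
                omega
              · simp [h]
              · simp [h])
          obtain ⟨a2, b2, ha2T, hT2b, hb2N, hclean2, hlo2, hhi2⟩ :=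
            extendClean Bad (10*n) t1 (t1 + n - 1) (by omega) (by omega)
              (fun t h1 h2 => ht1cl t h1 (by omega))
          have hb2a : b2 + 2 ≤ a := by
            by_contra hcon
            exact hclean2 (a-1) (by omega) (by omega) (by
              simp only [hBadDef]
              exact Or.inr (Or.inr (Or.inl haM)))
          rcases hhi2 with hb2Top | ⟨hb2lt, hb2Bad⟩
          · omega
          · by_cases hb2M : w (b2+1) = M
            · have hbe : b2 + 1 = a - 1 :=
                hwinj (b2+1) (a-1) (by omega) (by omega) (hb2M.trans haM.symm)
              rcases hlo2 with ha2Zero | ⟨ha2Pos, ha2Bad⟩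
              · -- [0, b2] clean with b2 = a-2 ≥ 5n
                apply GoalOfB
                apply routeB G n k w hwinj hwadj ch hchinj hchadj A B M D
                  hchA hchB hchM hchD hkn a2 b2 (by omega) (by omega)
                  (cleanConv a2 b2 hclean2)
                exact ⟨k, 5*n, le_rfl, by omega, by omega, hchk⟩
              · by_cases ha2M : w (a2-1) = M
                · exfalso
                  have := hwinj (a2-1) (b2+1) (by omega) (by omega) (ha2M.trans hb2M.symm)
                  omega
                · apply GoalOfW (a2-1) ha2Bad ha2M
                  apply routeWup G n w hwinj hwadj A B M D E0 (a2-1) (by omega)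
                  intro i h1 h2
                  exact cleanConv a2 b2 hclean2 (a2-1+i) (by omega) (by omega)
            · apply GoalOfW (b2+1) hb2Bad hb2M
              apply routeWdn G n w hwinj hwadj A B M D E0 (b2+1) (by omega) (by omega)
              intro i h1 h2
              exact cleanConv a2 b2 hclean2 (b2+1-i) (by omega) (by omega)
      · apply GoalOfW (a-1) haBad haM
        apply routeWup G n w hwinj hwadj A B M D E0 (a-1) (by omega)
        intro i h1 h2
        exact cleanConv a b hclean (a-1+i) (by omega) (by omega)
  · -- b < 10n, Bad (b+1)
    by_cases hbM : w (b+1) = M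
    · rcases hlo with haZero | ⟨haPos, haBad⟩
      · by_cases hcb : 5*n ≤ b
        · apply GoalOfB
          apply routeB G n k w hwinj hwadj ch hchinj hchadj A B M D hchA hchB hchM hchD hkn
            a b (by omega) (by omega) (cleanConv a b hclean)
          exact ⟨k, 5*n, le_rfl, by omega, by omega, hchk⟩
        · have hbne : b + 1 ≠ 5*n := fun h => hwcM (h ▸ hbM)
          have hble : b + 1 ≤ 5*n - 1 := by omega
          obtain ⟨t1, ht1lo, ht1hi, ht1cl⟩ := pigeonWin w Bad n (10*n) 5 (5*n) hwinj (by omega)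
            ({A, B, D, E0} : Finset V) (by have := card4 A B D E0; omega)
            (by
              intro t ht1 ht2 hB
              simp only [hBadDef] at hB
              rcases hB with h | h | h | h | h
              · simp [h]
              · simp [h]
              · exfalso
                have := hwinj t (b+1) (by omega) (by omega) (h.trans hbM.symm)
                omega
              · simp [h]
              · simp [h])
          obtain ⟨a2, b2, ha2T, hT2b, hb2N, hclean2, hlo2, hhi2⟩ :=
            extendClean Bad (10*n) t1 (t1 + n - 1) (by omega) (by omega)
              (fun t h1 h2 => ht1cl t h1 (by omega))
          have ha2b : b + 2 ≤ a2 := by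
            by_contra hcon
            exact hclean2 (b+1) (by omega) (by omega) (by
              simp only [hBadDef]
              exact Or.inr (Or.inr (Or.inl hbM)))
          rcases hlo2 with ha2Zero | ⟨ha2Pos, ha2Bad⟩
          · omega
          · by_cases ha2M : w (a2-1) = M
            · have hae : a2 - 1 = b + 1 :=
                hwinj (a2-1) (b+1) (by omega) (by omega) (ha2M.trans hbM.symm)
              rcases hhi2 with hb2Top | ⟨hb2lt, hb2Bad⟩
              · -- [b+2, 10n] clean
                apply GoalOfB
                apply routeB G n k w hwinj hwadj ch hchinj hchadj A B M D
                  hchA hchB hchM hchD hkn a2 b2 (by omega) (by omega)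
                  (cleanConv a2 b2 hclean2)
                exact ⟨k, 5*n, le_rfl, by omega, by omega, hchk⟩
              · by_cases hb2M : w (b2+1) = M
                · exfalso
                  have := hwinj (b2+1) (b+1) (by omega) (by omega) (hb2M.trans hbM.symm)
                  omega
                · apply GoalOfW (b2+1) hb2Bad hb2M
                  apply routeWdn G n w hwinj hwadj A B M D E0 (b2+1) (by omega) (by omega)
                  intro i h1 h2
                  exact cleanConv a2 b2 hclean2 (b2+1-i) (by omega) (by omega)
            · apply GoalOfW (a2-1) ha2Bad ha2M
              apply routeWup G n w hwinj hwadj A B M D E0 (a2-1) (by omega)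
              intro i h1 h2
              exact cleanConv a2 b2 hclean2 (a2-1+i) (by omega) (by omega)
      · by_cases haM : w (a-1) = M
        · exfalso
          have := hwinj (a-1) (b+1) (by omega) (by omega) (haM.trans hbM.symm)
          omega
        · apply GoalOfW (a-1) haBad haM
          apply routeWup G n w hwinj hwadj A B M D E0 (a-1) (by omega)
          intro i h1 h2
          exact cleanConv a b hclean (a-1+i) (by omega) (by omega)
    · apply GoalOfW (b+1) hbBad hbM
      apply routeWdn G n w hwinj hwadj A B M D E0 (b+1) (by omega) (by omega)
      intro i h1 h2
      exact cleanConv a b hclean (b+1-i) (by omega) (by omega)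

/-- if `G` has two paths of length `5n` from `u`, disjoint except at `u`, and
a copy of `T₁ +· T₂ +· P k` (`0 ≤ k ≤ n`) whose terminal path vertex `y_k` is `u`, then
`C = T₁ +· T₂ +· P n` embeds in `G` as a subgraph. -/
theorem stmt_16 (n : ℕ) (hn : 1 ≤ n) {V : Type} (G : SimpleGraph V) (u : V)
    (p q : Fin (5 * n + 1) → V)
    (hp : Function.Injective p) (hq : Function.Injective q)
    (hpadj : ∀ i : Fin (5 * n), G.Adj (p i.castSucc) (p i.succ))
    (hqadj : ∀ i : Fin (5 * n), G.Adj (q i.castSucc) (q i.succ))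
    (hp0 : p 0 = u) (hq0 : q 0 = u)
    (hdisj : ∀ i j, p i = q j → p i = u)
    (k : ℕ) (hk : k ≤ n) (f : Fin (k + 5) ↪ V)
    (hf : ∀ x y, (TTP k).Adj x y → G.Adj (f x) (f y))
    (hfu : f ⟨4 + k, by omega⟩ = u) :
    SubIso (TTP n) G := by
  classical
  have hp00 : p ⟨0, by omega⟩ = u := by
    have h : (⟨0, by omega⟩ : Fin (5*n+1)) = 0 := by
      apply Fin.ext; simp
    rw [h]; exact hp0
  have hq00 : q ⟨0, by omega⟩ = u := by
    have h : (⟨0, by omega⟩ : Fin (5*n+1)) = 0 := by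
      apply Fin.ext; simp
    rw [h]; exact hq0
  -- adjacency builder for TTP k
  have mkadj : ∀ (i j : ℕ) (hi : i < k+5) (hj : j < k+5),
      ((i=0∧j=1)∨(i=0∧j=2)∨(i=1∧j=2)∨(i=2∧j=3)∨(i=2∧j=4)∨(i=3∧j=4)∨
       (∃ l, l < k ∧ i = 4+l ∧ j = 5+l)) →
      (TTP k).Adj ⟨i,hi⟩ ⟨j,hj⟩ := by
    intro i j hi hj h
    rw [TTP, SimpleGraph.fromRel_adj]
    constructor
    · rcases h with ⟨h1,h2⟩|⟨h1,h2⟩|⟨h1,h2⟩|⟨h1,h2⟩|⟨h1,h2⟩|⟨h1,h2⟩|⟨l,hl,h1,h2⟩ <;>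
        (intro hcon; rw [Fin.mk.injEq] at hcon; omega)
    · exact Or.inl h
  have fne : ∀ (i j : ℕ) (hi : i < k+5) (hj : j < k+5), i ≠ j →
      f ⟨i, hi⟩ ≠ f ⟨j, hj⟩ := by
    intro i j hi hj hne hcon
    have := f.injective hcon
    rw [Fin.mk.injEq] at this
    exact hne this
  set A := f ⟨0, by omega⟩ with hA
  set B := f ⟨1, by omega⟩ with hB
  set M := f ⟨2, by omega⟩ with hM
  set D := f ⟨3, by omega⟩ with hD
  set E := f ⟨4, by omega⟩ with hE
  have e01 : G.Adj A B := hf _ _ (mkadj 0 1 (by omega) (by omega) (by left; exact ⟨rfl, rfl⟩))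
  have e02 : G.Adj A M := hf _ _ (mkadj 0 2 (by omega) (by omega)
    (Or.inr (Or.inl ⟨rfl, rfl⟩)))
  have e12 : G.Adj B M := hf _ _ (mkadj 1 2 (by omega) (by omega)
    (Or.inr (Or.inr (Or.inl ⟨rfl, rfl⟩))))
  have e23 : G.Adj M D := hf _ _ (mkadj 2 3 (by omega) (by omega)
    (Or.inr (Or.inr (Or.inr (Or.inl ⟨rfl, rfl⟩)))))
  have e24 : G.Adj M E := hf _ _ (mkadj 2 4 (by omega) (by omega)
    (Or.inr (Or.inr (Or.inr (Or.inr (Or.inl ⟨rfl, rfl⟩))))))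
  have e34 : G.Adj D E := hf _ _ (mkadj 3 4 (by omega) (by omega)
    (Or.inr (Or.inr (Or.inr (Or.inr (Or.inr (Or.inl ⟨rfl, rfl⟩)))))))
  -- the chain
  set ch : ℕ → V := fun j => if h : j ≤ k then f ⟨4 + j, by omega⟩ else u with hch
  have hchval : ∀ j (hj : j ≤ k), ch j = f ⟨4 + j, by omega⟩ := by
    intro j hj
    simp only [hch]
    rw [dif_pos hj]
  have hchinj : ∀ i j, i ≤ k → j ≤ k → ch i = ch j → i = j := by
    intro i j hi hj hij
    rw [hchval i hi, hchval j hj] at hij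
    have := f.injective hij
    rw [Fin.mk.injEq] at this
    omega
  have hchadj : ∀ i, i < k → G.Adj (ch i) (ch (i+1)) := by
    intro i hi
    rw [hchval i (by omega), hchval (i+1) (by omega)]
    have h45 : (4:ℕ) + (i+1) = 5 + i := by omega
    have := hf _ _ (mkadj (4+i) (4+(i+1)) (by omega) (by omega)
      (Or.inr (Or.inr (Or.inr (Or.inr (Or.inr (Or.inr ⟨i, hi, rfl, by omega⟩)))))))
    exact this
  have hchA : ∀ i, i ≤ k → ch i ≠ A := by
    intro i hi
    rw [hchval i hi, hA]; exact fne _ _ _ _ (by omega)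
  have hchB : ∀ i, i ≤ k → ch i ≠ B := by
    intro i hi
    rw [hchval i hi, hB]; exact fne _ _ _ _ (by omega)
  have hchM : ∀ i, i ≤ k → ch i ≠ M := by
    intro i hi
    rw [hchval i hi, hM]; exact fne _ _ _ _ (by omega)
  have hchD : ∀ i, i ≤ k → ch i ≠ D := by
    intro i hi
    rw [hchval i hi, hD]; exact fne _ _ _ _ (by omega)
  have hch0 : ch 0 = E := by rw [hchval 0 (by omega), hE]
  -- the long path
  set w : ℕ → V := fun t =>
    if h : t < 5*n then q ⟨5*n - t, by omega⟩
    else if h2 : t ≤ 10*n then p ⟨t - 5*n, by omega⟩ else u with hw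
  have hwq : ∀ t (h : t < 5*n), w t = q ⟨5*n - t, by omega⟩ := by
    intro t h
    simp only [hw]
    rw [dif_pos h]
  have hwp : ∀ t (h1 : 5*n ≤ t) (h2 : t ≤ 10*n), w t = p ⟨t - 5*n, by omega⟩ := by
    intro t h1 h2
    simp only [hw]
    rw [dif_neg (by omega), dif_pos h2]
  have hwinj : ∀ s t, s ≤ 10*n → t ≤ 10*n → w s = w t → s = t := by
    intro s t hs ht hst
    by_cases h1 : s < 5*n <;> by_cases h2 : t < 5*n
    · rw [hwq s h1, hwq t h2] at hst
      have := hq hst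
      rw [Fin.mk.injEq] at this
      omega
    · rw [hwq s h1, hwp t (by omega) ht] at hst
      exfalso
      have h3 := hdisj ⟨t - 5*n, by omega⟩ ⟨5*n - s, by omega⟩ hst.symm
      rw [← hp00] at h3
      have h4 := hp h3
      rw [Fin.mk.injEq] at h4
      have h6 : q (⟨5*n - s, by omega⟩ : Fin (5*n+1)) = q ⟨0, by omega⟩ := by
        rw [hst, h3, hp00, ← hq00]
      have h7 := hq h6
      rw [Fin.mk.injEq] at h7
      omega
    · rw [hwp s (by omega) hs, hwq t h2] at hst
      exfalso
      have h3 := hdisj ⟨s - 5*n, by omega⟩ ⟨5*n - t, by omega⟩ hst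
      rw [← hp00] at h3
      have h4 := hp h3
      rw [Fin.mk.injEq] at h4
      have h6 : q (⟨5*n - t, by omega⟩ : Fin (5*n+1)) = q ⟨0, by omega⟩ := by
        rw [← hst, h3, hp00, ← hq00]
      have h7 := hq h6
      rw [Fin.mk.injEq] at h7
      omega
    · rw [hwp s (by omega) hs, hwp t (by omega) ht] at hst
      have := hp hst
      rw [Fin.mk.injEq] at this
      omega
  have hwadj : ∀ t, t < 10*n → G.Adj (w t) (w (t+1)) := by
    intro t ht
    by_cases h1 : t < 5*n
    · rw [hwq t h1]
      by_cases h2 : t + 1 < 5*n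
      · rw [hwq (t+1) h2]
        have h3 := hqadj ⟨5*n - t - 1, by omega⟩
        have h4 : (⟨5*n - t - 1, by omega⟩ : Fin (5*n)).castSucc
            = (⟨5*n - (t+1), by omega⟩ : Fin (5*n+1)) := by
          apply Fin.ext; simp [Fin.castSucc]; omega
        have h5 : (⟨5*n - t - 1, by omega⟩ : Fin (5*n)).succ
            = (⟨5*n - t, by omega⟩ : Fin (5*n+1)) := by
          apply Fin.ext; simp [Fin.succ]; omega
        rw [h4, h5] at h3
        exact h3.symm
      · have h2' : t + 1 = 5*n := by omega
        rw [hwp (t+1) (by omega) (by omega)]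
        have h6 : t + 1 - 5*n = 0 := by omega
        have h7 : (⟨t + 1 - 5*n, by omega⟩ : Fin (5*n+1)) = ⟨0, by omega⟩ := by
          apply Fin.ext; simp; omega
        rw [h7, hp00, ← hq00]
        have h3 := hqadj ⟨0, by omega⟩
        have h4 : (⟨0, by omega⟩ : Fin (5*n)).castSucc = (⟨0, by omega⟩ : Fin (5*n+1)) := by
          apply Fin.ext; simp
        have h5 : (⟨0, by omega⟩ : Fin (5*n)).succ = (⟨1, by omega⟩ : Fin (5*n+1)) := by
          apply Fin.ext; simp
        rw [h4, h5] at h3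
        have h8 : 5*n - t = 1 := by omega
        have h9 : (⟨5*n - t, by omega⟩ : Fin (5*n+1)) = ⟨1, by omega⟩ := by
          apply Fin.ext; simp; omega
        rw [h9]
        exact h3.symm
    · rw [hwp t (by omega) (by omega), hwp (t+1) (by omega) (by omega)]
      have h3 := hpadj ⟨t - 5*n, by omega⟩
      have h4 : (⟨t - 5*n, by omega⟩ : Fin (5*n)).castSucc
          = (⟨t - 5*n, by omega⟩ : Fin (5*n+1)) := by
        apply Fin.ext; simp [Fin.castSucc]
      have h5 : (⟨t - 5*n, by omega⟩ : Fin (5*n)).succ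
          = (⟨t + 1 - 5*n, by omega⟩ : Fin (5*n+1)) := by
        apply Fin.ext; simp [Fin.succ]; omega
      rw [h4, h5] at h3
      exact h3
  have hchk : ch k = w (5*n) := by
    rw [hchval k le_rfl, hwp (5*n) le_rfl (by omega)]
    have h6 : (⟨5*n - 5*n, by omega⟩ : Fin (5*n+1)) = ⟨0, by omega⟩ := by
      apply Fin.ext; simp
    rw [h6, hp00]
    have h7 : (4:ℕ) + k = 4 + k := rfl
    exact hfu
  obtain ⟨s, z, hs, hz0, hzadj, hzinj, hznot⟩ :=
    key G n k hn hk w hwinj hwadj ch hchinj hchadj hchk A B M D hchA hchB hchM hchD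
  have hznot' : ∀ i, 1 ≤ i → i ≤ n →
      z i ≠ A ∧ z i ≠ B ∧ z i ≠ M ∧ z i ≠ D ∧ z i ≠ E := by
    intro i h1 h2
    have := hznot i h1 h2
    rw [hch0] at this
    exact this
  rcases hs with hsA | hsB | hsD | hsE
  · -- s = A : X = D, Y = E, W' = B
    have hz0' : z 0 = A := hz0.trans hsA
    apply assemble G n D E M B z e34 e23.symm e24.symm e12.symm
      (by rw [hz0']; exact e02.symm) (by rw [hz0']; exact e01.symm)
      (by rw [hD, hB]; exact fne _ _ _ _ (by omega))
      (by rw [hz0', hD, hA]; exact fne _ _ _ _ (by omega))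
      (by rw [hE, hB]; exact fne _ _ _ _ (by omega))
      (by rw [hz0', hE, hA]; exact fne _ _ _ _ (by omega))
      hzadj hzinj
    intro i h1 h2
    have h3 := hznot' i h1 h2
    exact ⟨h3.2.2.2.1, h3.2.2.2.2, h3.2.2.1, h3.2.1⟩
  · -- s = B : X = D, Y = E, W' = A
    have hz0' : z 0 = B := hz0.trans hsB
    apply assemble G n D E M A z e34 e23.symm e24.symm e02.symm
      (by rw [hz0']; exact e12.symm) (by rw [hz0']; exact e01)
      (by rw [hD, hA]; exact fne _ _ _ _ (by omega))
      (by rw [hz0', hD, hB]; exact fne _ _ _ _ (by omega))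
      (by rw [hE, hA]; exact fne _ _ _ _ (by omega))
      (by rw [hz0', hE, hB]; exact fne _ _ _ _ (by omega))
      hzadj hzinj
    intro i h1 h2
    have h3 := hznot' i h1 h2
    exact ⟨h3.2.2.2.1, h3.2.2.2.2, h3.2.2.1, h3.1⟩
  · -- s = D : X = A, Y = B, W' = E
    have hz0' : z 0 = D := hz0.trans hsD
    apply assemble G n A B M E z e01 e02 e12 e24
      (by rw [hz0']; exact e23) (by rw [hz0']; exact e34.symm)
      (by rw [hA, hE]; exact fne _ _ _ _ (by omega))
      (by rw [hz0', hA, hD]; exact fne _ _ _ _ (by omega))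
      (by rw [hB, hE]; exact fne _ _ _ _ (by omega))
      (by rw [hz0', hB, hD]; exact fne _ _ _ _ (by omega))
      hzadj hzinj
    intro i h1 h2
    have h3 := hznot' i h1 h2
    exact ⟨h3.1, h3.2.1, h3.2.2.1, h3.2.2.2.2⟩
  · -- s = ch 0 = E : X = A, Y = B, W' = D
    have hz0' : z 0 = E := hz0.trans (hsE.trans hch0)
    apply assemble G n A B M D z e01 e02 e12 e23
      (by rw [hz0']; exact e24) (by rw [hz0']; exact e34)
      (by rw [hA, hD]; exact fne _ _ _ _ (by omega))
      (by rw [hz0', hA, hE]; exact fne _ _ _ _ (by omega))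
      (by rw [hB, hD]; exact fne _ _ _ _ (by omega))
      (by rw [hz0', hB, hE]; exact fne _ _ _ _ (by omega))
      hzadj hzinj
    intro i h1 h2
    have h3 := hznot' i h1 h2
    exact ⟨h3.1, h3.2.1, h3.2.2.1, h3.2.2.2.1⟩
end
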